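/- arXiv:2201.12429 — 6 statements merged into one kernel-verified Lean document; each statement's English description precedes it below -/
import Mathlib

section
/- Let X be a locally solid vector lattice with the AM-property and let U be a solid zero neighborhood in X. Then for each natural number m ≥ 1, the m-fold set U ∨ … ∨ U (the set of all suprema u₁ ∨ … ∨ u_m with each uᵢ ∈ U) equals U. -/
open Filter Topology Set Pointwise

section Defs

variable {X : Type*}

/-- A set is solid if `|y| ≤ |x|` and `x ∈ S` imply `y ∈ S`. -/
def IsSolidSet [Lattice X] [AddCommGroup X] (S : Set X) : Prop :=
  ∀ x ∈ S, ∀ y : X, |y| ≤ |x| → y ∈ S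

/-- The topology has a base of solid zero neighborhoods. -/
def LocallySolid (X : Type*) [Lattice X] [AddCommGroup X] [TopologicalSpace X] : Prop :=
  ∀ V ∈ 𝓝 (0 : X), ∃ U ∈ 𝓝 (0 : X), IsSolidSet U ∧ U ⊆ V

/-- Topological (von Neumann type) boundedness. -/
def VBounded [AddCommGroup X] [Module ℝ X] [TopologicalSpace X] (B : Set X) : Prop :=
  ∀ V ∈ 𝓝 (0 : X), ∃ α : ℝ, 0 < α ∧ B ⊆ α • V

/-- Total boundedness: `B ⊆ F + V` with `F` finite, for every zero neighborhood `V`. -/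
def TotBounded [AddCommGroup X] [TopologicalSpace X] (B : Set X) : Prop :=
  ∀ V ∈ 𝓝 (0 : X), ∃ F : Finset X, B ⊆ ↑F + V

/-- The AM-property: finite sup-closures of bounded sets are bounded with the same scalars. -/
def AMProperty (X : Type*) [Lattice X] [AddCommGroup X] [Module ℝ X] [TopologicalSpace X] : Prop :=
  ∀ B : Set X, VBounded B → ∀ V ∈ 𝓝 (0 : X), ∀ α : ℝ, 0 < α → B ⊆ α • V →
    supClosure B ⊆ α • V

end Defs
variable {X : Type*} [AddCommGroup X] [Lattice X] [Module ℝ X] [TopologicalSpace X]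
  [IsTopologicalAddGroup X] [ContinuousSMul ℝ X] [CovariantClass X X (· + ·) (· ≤ ·)] [T2Space X]

/-- Finite sets are VBounded. -/
lemma vBounded_of_finite {B : Set X} (hB : B.Finite) : VBounded B := by
  intro V hV
  have hvb : Bornology.IsVonNBounded ℝ B := by
    rw [← Set.biUnion_of_singleton B]
    exact (Bornology.isVonNBounded_biUnion hB).2 fun x _ ↦ Bornology.isVonNBounded_singleton x
  obtain ⟨r, hr, h⟩ := (hvb hV).exists_pos
  exact ⟨r, hr, h r (by simp [abs_of_pos hr, le_refl])⟩

/-- Under the AM-property, the `m`-fold sup of a solid zero neighborhood `U` equals `U`. -/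
theorem sup_self_of_solid_nhds (hls : LocallySolid X) (ham : AMProperty X)
    (U : Set X) (hU : U ∈ 𝓝 (0 : X)) (hsolid : IsSolidSet U) (m : ℕ) (hm : 0 < m) :
    {x : X | ∃ u : Fin m → X, (∀ i, u i ∈ U) ∧
      x = Finset.univ.sup' (Finset.univ_nonempty_iff.mpr ⟨⟨0, hm⟩⟩) u} = U := by
  ext x
  constructor
  · rintro ⟨u, hu, rfl⟩
    have hB : VBounded (Set.range u) := vBounded_of_finite (Set.finite_range u)
    have hsub : Set.range u ⊆ (1 : ℝ) • U := by
      rw [one_smul]; rintro _ ⟨i, rfl⟩; exact hu i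
    have hne : (Finset.univ : Finset (Fin m)).Nonempty := Finset.univ_nonempty_iff.mpr ⟨⟨0, hm⟩⟩
    have := ham (Set.range u) hB U hU 1 one_pos hsub
      (finsetSup'_mem_supClosure hne fun i _ ↦ ⟨i, rfl⟩)
    rwa [one_smul] at this
  · intro hx
    exact ⟨fun _ ↦ x, fun _ ↦ hx, (Finset.sup'_const _ x).symm⟩
end

section
/- Let X be a locally solid vector lattice with the AM-property. If B ⊆ X is totally bounded, then the set B^∨ of all finite suprema of elements of B is totally bounded. -/
open Filter Topology Set Pointwise

section LatticeAux
variable {X : Type*} [AddCommGroup X] [Lattice X] [CovariantClass X X (· + ·) (· ≤ ·)]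

lemma aux_inf_add_le {a b c : X} (ha : 0 ≤ a) (hb : 0 ≤ b) (hc : 0 ≤ c) :
    a ⊓ (b + c) ≤ a ⊓ b + a ⊓ c := by
  have h : a ⊓ b + a ⊓ c = ((a + a) ⊓ (a + c)) ⊓ ((b + a) ⊓ (b + c)) := by
    rw [inf_add, add_inf, add_inf]
  rw [h]
  refine le_inf (le_inf ?_ ?_) (le_inf ?_ ?_)
  · exact inf_le_left.trans (le_add_of_nonneg_right ha)
  · exact inf_le_left.trans (le_add_of_nonneg_right hc)
  · exact inf_le_left.trans (le_add_of_nonneg_left hb)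
  · exact inf_le_right

lemma aux_disjoint_nsmul {a b : X} (ha : 0 ≤ a) (hb : 0 ≤ b) (h : a ⊓ b = 0) (n : ℕ) :
    a ⊓ (n • b) = 0 := by
  induction n with
  | zero => simpa using inf_eq_right.2 ha
  | succ n ih =>
      refine le_antisymm ?_ (le_inf ha (nsmul_nonneg hb _))
      calc a ⊓ ((n + 1) • b) = a ⊓ (n • b + b) := by rw [succ_nsmul]
        _ ≤ a ⊓ (n • b) + a ⊓ b := aux_inf_add_le ha (nsmul_nonneg hb n) hb
        _ = 0 := by rw [ih, h, add_zero]

lemma aux_disjoint_nsmul₂ {a b : X} (ha : 0 ≤ a) (hb : 0 ≤ b) (h : a ⊓ b = 0) (n m : ℕ) :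
    (n • a) ⊓ (m • b) = 0 := by
  have h1 : a ⊓ (m • b) = 0 := aux_disjoint_nsmul ha hb h m
  have := aux_disjoint_nsmul (nsmul_nonneg hb m) ha (by rwa [inf_comm]) n
  rwa [inf_comm]

lemma aux_posPart_eq {u v z : X} (hu : 0 ≤ u) (hv : 0 ≤ v) (huv : u ⊓ v = 0)
    (hz : u - v = z) : z⁺ = u := by
  have hs : u ⊔ v = u + v := by
    have := inf_add_sup u v
    rw [huv, zero_add] at this; exact this
  rw [posPart_def, ← hz]
  calc (u - v) ⊔ 0 = (u - v) ⊔ (v - v) := by rw [sub_self]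
    _ = (u ⊔ v) - v := (sup_sub u v v).symm
    _ = (u + v) - v := by rw [hs]
    _ = u := add_sub_cancel_right u v

lemma aux_posPart_nsmul (n : ℕ) (a : X) : (n • a)⁺ = n • a⁺ :=
  aux_posPart_eq (nsmul_nonneg (posPart_nonneg _) n) (nsmul_nonneg (negPart_nonneg _) n)
    (aux_disjoint_nsmul₂ (posPart_nonneg _) (negPart_nonneg _) (posPart_inf_negPart_eq_zero a) n n)
    (by rw [← smul_sub, posPart_sub_negPart])

lemma aux_negPart_nsmul (n : ℕ) (a : X) : (n • a)⁻ = n • a⁻ := by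
  rw [← posPart_neg, ← smul_neg, aux_posPart_nsmul, posPart_neg]

lemma aux_abs_nsmul (n : ℕ) (a : X) : |n • a| = n • |a| := by
  rw [← posPart_add_negPart (n • a), aux_posPart_nsmul, aux_negPart_nsmul, ← smul_add,
    posPart_add_negPart]

lemma aux_nsmul_le_cancel {x y : X} {n : ℕ} (hn : 0 < n) (h : n • x ≤ n • y) : x ≤ y := by
  have h1 : 0 ≤ n • (y - x) := by rw [smul_sub]; exact sub_nonneg.2 h
  have h2 : n • (y - x)⁻ = 0 := by rw [← aux_negPart_nsmul, negPart_eq_zero.2 h1]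
  have h3 : (y - x)⁻ ≤ n • (y - x)⁻ := by
    obtain ⟨m, rfl⟩ := Nat.exists_eq_succ_of_ne_zero hn.ne'
    rw [succ_nsmul]
    exact le_add_of_nonneg_left (nsmul_nonneg (negPart_nonneg _) m)
  have h4 : (y - x)⁻ = 0 := le_antisymm (h3.trans_eq h2) (negPart_nonneg _)
  exact sub_nonneg.1 (negPart_eq_zero.1 h4)

lemma aux_nsmul_le_nsmul {c : X} (hc : 0 ≤ c) {n m : ℕ} (h : n ≤ m) : n • c ≤ m • c := by
  obtain ⟨k, rfl⟩ := Nat.exists_eq_add_of_le h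
  rw [add_nsmul]
  exact le_add_of_nonneg_right (nsmul_nonneg hc k)

/-- Birkhoff's inequality for finite suprema. -/
lemma aux_birkhoff {ι : Type*} {t : Finset ι} (ht : t.Nonempty) (p q : ι → X) :
    |t.sup' ht p - t.sup' ht q| ≤ t.sup' ht fun i => |p i - q i| := by
  have key : ∀ p q : ι → X, t.sup' ht p - t.sup' ht q ≤ t.sup' ht fun i => |p i - q i| := by
    intro p q
    rw [sub_le_iff_le_add]
    refine Finset.sup'_le _ _ fun i hi => ?_
    calc p i = q i + (p i - q i) := by abel
      _ ≤ q i + |p i - q i| := add_le_add le_rfl (le_abs_self _)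
      _ ≤ (t.sup' ht fun i => |p i - q i|) + t.sup' ht q := by
          rw [add_comm]
          exact add_le_add (Finset.le_sup' (fun i => |p i - q i|) hi) (Finset.le_sup' q hi)
  refine abs_le'.2 ⟨key p q, ?_⟩
  rw [neg_sub]
  calc t.sup' ht q - t.sup' ht p ≤ t.sup' ht fun i => |q i - p i| := key q p
    _ = t.sup' ht fun i => |p i - q i| := by
        refine Finset.sup'_congr ht rfl fun i _ => abs_sub_comm _ _

end LatticeAux

section ModAux
variable {X : Type*} [AddCommGroup X] [Lattice X] [Module ℝ X]
  [CovariantClass X X (· + ·) (· ≤ ·)]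

lemma aux_abs_le_abs_natDiv {n m : ℕ} (hm : 0 < m) (hnm : n ≤ m) (s : X) :
    |((n : ℝ) / (m : ℝ)) • s| ≤ |s| := by
  apply aux_nsmul_le_cancel hm
  have hm0 : (m : ℝ) ≠ 0 := Nat.cast_ne_zero.2 hm.ne'
  have h1 : m • (((n:ℝ)/(m:ℝ)) • s) = n • s := by
    rw [← Nat.cast_smul_eq_nsmul ℝ m, ← Nat.cast_smul_eq_nsmul ℝ n, smul_smul]
    congr 1; field_simp
  rw [← aux_abs_nsmul, h1, aux_abs_nsmul]
  exact aux_nsmul_le_nsmul (abs_nonneg s) hnm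

/-- membership in natural scalar multiples of a solid set is monotone in the scalar. -/
lemma aux_smul_mono_mem {S : Set X} (hS : IsSolidSet S) {n m : ℕ} (hn : 0 < n) (hnm : n ≤ m)
    {x : X} (hx : x ∈ (n : ℝ) • S) : x ∈ (m : ℝ) • S := by
  obtain ⟨s, hs, rfl⟩ := hx
  have hm : 0 < m := hn.trans_le hnm
  have hm0 : (m : ℝ) ≠ 0 := Nat.cast_ne_zero.2 hm.ne'
  refine ⟨((n : ℝ) / (m : ℝ)) • s, hS s hs _ (aux_abs_le_abs_natDiv hm hnm s), ?_⟩
  show (m : ℝ) • (((n : ℝ) / (m : ℝ)) • s) = (n : ℝ) • s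
  rw [smul_smul]
  congr 1; field_simp

/-- natural scalar multiples of solid sets are solid. -/
lemma aux_solid_smul {S : Set X} (hS : IsSolidSet S) {n : ℕ} (hn : 0 < n) :
    IsSolidSet ((n : ℝ) • S) := by
  have hn0 : (n : ℝ) ≠ 0 := Nat.cast_ne_zero.2 hn.ne'
  rintro x ⟨s, hs, rfl⟩ y hy
  refine ⟨(n : ℝ)⁻¹ • y, hS s hs _ ?_, smul_inv_smul₀ hn0 y⟩
  apply aux_nsmul_le_cancel hn
  have h1 : n • ((n : ℝ)⁻¹ • y) = y := by
    rw [← Nat.cast_smul_eq_nsmul ℝ n, smul_inv_smul₀ hn0]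
  have h2 : (n : ℝ) • s = n • s := Nat.cast_smul_eq_nsmul ℝ n s
  rw [← aux_abs_nsmul, h1, ← aux_abs_nsmul, ← h2]
  exact hy

end ModAux

variable {X : Type*} [AddCommGroup X] [Lattice X] [Module ℝ X] [TopologicalSpace X]
  [IsTopologicalAddGroup X] [ContinuousSMul ℝ X] [CovariantClass X X (· + ·) (· ≤ ·)] [T2Space X]

/-- The set of absolute values of a totally bounded set is (von Neumann) bounded. -/
lemma aux_vbounded_abs (hls : LocallySolid X) {D : Set X} (hD : TotBounded D) :
    VBounded {x : X | ∃ d ∈ D, x = |d|} := by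
  intro V' hV'
  obtain ⟨T, hT, hTs, hTV⟩ := hls V' hV'
  obtain ⟨S', hS', hS'T⟩ := exists_nhds_zero_half hT
  obtain ⟨S, hS, hSs, hSS'⟩ := hls S' hS'
  obtain ⟨G, hG⟩ := hD S hS
  have habs : ∀ g : X, ∃ n : ℕ, 0 < n ∧ ((n : ℝ))⁻¹ • g ∈ S := by
    intro g
    have h1 : Tendsto (fun n : ℕ => ((n : ℝ))⁻¹ • g) atTop (𝓝 0) := by
      simpa using (tendsto_inv_atTop_nhds_zero_nat (𝕜 := ℝ)).smul_const g
    have h2 : ∀ᶠ n : ℕ in atTop, ((n : ℝ))⁻¹ • g ∈ S := h1.eventually_mem hS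
    obtain ⟨n, hn1, hn2⟩ := (h2.and (eventually_gt_atTop 0)).exists
    exact ⟨n, hn2, hn1⟩
  choose n hnpos hnmem using habs
  classical
  set N : ℕ := max 1 (G.sup n) with hN
  have hN1 : 0 < N := lt_of_lt_of_le one_pos (le_max_left _ _)
  refine ⟨(N : ℝ), by exact_mod_cast hN1, ?_⟩
  rintro x ⟨d, hd, rfl⟩
  obtain ⟨g, hg, s, hs, rfl⟩ := hG hd
  -- `g ∈ N • S`
  have hgN : g ∈ (N : ℝ) • S := by
    refine aux_smul_mono_mem hSs (hnpos g) (le_trans (Finset.le_sup hg) (le_max_right _ _)) ?_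
    refine ⟨((n g : ℝ))⁻¹ • g, hnmem g, ?_⟩
    show ((n g : ℝ)) • (((n g : ℝ))⁻¹ • g) = g
    rw [smul_inv_smul₀ (Nat.cast_ne_zero.2 (hnpos g).ne')]
  have hsN : s ∈ (N : ℝ) • S := by
    refine aux_smul_mono_mem hSs one_pos (le_max_left _ _) ?_
    refine ⟨s, hs, ?_⟩
    show ((1 : ℕ) : ℝ) • s = s
    rw [Nat.cast_one, one_smul]
  obtain ⟨u, hu, hu'⟩ := hgN
  obtain ⟨v, hv, hv'⟩ := hsN
  have hu'' : (N : ℝ) • u = g := hu'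
  have hv'' : (N : ℝ) • v = s := hv'
  have hdT : g + s ∈ (N : ℝ) • T := by
    refine ⟨u + v, hS'T u (hSS' hu) v (hSS' hv), ?_⟩
    show (N : ℝ) • (u + v) = g + s
    rw [smul_add, hu'', hv'']
  have : |g + s| ∈ (N : ℝ) • T :=
    aux_solid_smul hTs hN1 _ hdT _ (by rw [abs_abs])
  exact smul_set_mono hTV this

/-- Under the AM-property, the sup-closure of a totally bounded set is totally bounded. -/
theorem totBounded_supClosure (hls : LocallySolid X) (ham : AMProperty X)
    (B : Set X) (hB : TotBounded B) : TotBounded (supClosure B) := by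
  intro V hV
  obtain ⟨W, hW, hWs, hWV⟩ := hls V hV
  obtain ⟨F, hF⟩ := hB W hW
  classical
  -- decompose elements of `B`
  have hdec : ∀ b ∈ B, ∃ f, f ∈ (F : Set X) ∧ ∃ w ∈ W, f + w = b := fun b hb => hF hb
  choose! φ hφ ψ hψ hφψ using hdec
  -- the difference set
  set D : Set X := {x : X | ∃ b ∈ B, ∃ f ∈ (F : Set X), x = b - f} with hDdef
  have hDtb : TotBounded D := by
    intro U hU
    obtain ⟨G, hG⟩ := hB U hU
    refine ⟨G - F, ?_⟩
    rintro x ⟨b, hb, f, hf, rfl⟩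
    obtain ⟨g, hg, u, hu, rfl⟩ := hG hb
    refine ⟨g - f, ?_, u, hu, by show g - f + u = g + u - f; abel⟩
    rw [Finset.coe_sub]
    exact Set.sub_mem_sub hg hf
  -- the small set
  set E : Set X := {x : X | ∃ d, d ∈ D ∧ d ∈ W ∧ x = |d|} with hEdef
  have hEvb : VBounded E := by
    intro V' hV'
    obtain ⟨α, hα, hsub⟩ := aux_vbounded_abs hls hDtb V' hV'
    exact ⟨α, hα, fun x ⟨d, hd, hdW, hx⟩ => hsub ⟨d, hd, hx⟩⟩
  have hEW : E ⊆ (1 : ℝ) • W := by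
    rintro x ⟨d, hd, hdW, rfl⟩
    exact ⟨|d|, hWs d hdW _ (by rw [abs_abs]), one_smul ℝ _⟩
  have hsupE : supClosure E ⊆ (1 : ℝ) • W := ham E hEvb W hW 1 one_pos hEW
  -- the finite set of suprema of `F`
  have hfin : (supClosure (F : Set X)).Finite := F.finite_toSet.supClosure
  refine ⟨hfin.toFinset, ?_⟩
  rintro x hx
  obtain ⟨t, ht, hts, rfl⟩ := hx
  set y : X := t.sup' ht φ with hy
  have hyF : y ∈ supClosure (F : Set X) :=
    finsetSup'_mem_supClosure ht fun b hb => hφ b (hts hb)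
  -- the error term
  have hzE : (t.sup' ht fun b => |ψ b|) ∈ supClosure E := by
    refine finsetSup'_mem_supClosure ht fun b hb => ?_
    have hbB : b ∈ B := hts hb
    exact ⟨ψ b, ⟨b, hbB, φ b, hφ b hbB, (eq_sub_of_add_eq' (hφψ b hbB)).symm ▸ rfl⟩, hψ b hbB, rfl⟩
  have hdiff : t.sup' ht id - y ∈ W := by
    have heq : (t.sup' ht fun b => |id b - φ b|) = t.sup' ht fun b => |ψ b| := by
      refine Finset.sup'_congr ht rfl fun b hb => ?_
      simp only [id_eq]
      rw [eq_sub_of_add_eq' (hφψ b (hts hb))]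
    have hb1 : |t.sup' ht id - y| ≤ t.sup' ht fun b => |ψ b| := heq ▸ aux_birkhoff ht id φ
    have h0 : (0 : X) ≤ t.sup' ht fun b => |ψ b| := by
      obtain ⟨b, hb⟩ := ht
      exact le_trans (abs_nonneg (ψ b)) (Finset.le_sup' (fun b => |ψ b|) hb)
    obtain ⟨z, hzW, hz⟩ := hsupE hzE
    have hz2 : z = t.sup' ht fun b => |ψ b| := by
      have hz3 : (1 : ℝ) • z = t.sup' ht fun b => |ψ b| := hz
      rwa [one_smul] at hz3
    refine hWs z hzW _ ?_
    rw [hz2, abs_of_nonneg h0]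
    exact hb1
  refine ⟨y, hfin.mem_toFinset.2 hyF, t.sup' ht id - y, hWV hdiff, ?_⟩
  show y + (t.sup' ht id - y) = t.sup' ht id
  abel
end

section
/- Let X be a locally solid vector lattice with the AM-property and suppose X is such that closures of totally bounded sets are compact (e.g. X is complete). If B ⊆ X is nonempty and totally bounded, then sup B exists in X and sup B belongs to the closure of B^∨. -/
set_option linter.unusedSectionVars false


open Filter Topology Set Pointwise

variable {X : Type*} [AddCommGroup X] [Lattice X] [Module ℝ X] [TopologicalSpace X]
  [IsTopologicalAddGroup X] [ContinuousSMul ℝ X] [CovariantClass X X (· + ·) (· ≤ ·)] [T2Space X]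

private lemma nsmul_nonneg' {x : X} (hx : 0 ≤ x) : ∀ n : ℕ, 0 ≤ n • x
  | 0 => by simp
  | (n + 1) => by
      rw [succ_nsmul]
      calc (0 : X) ≤ x := hx
        _ = 0 + x := (zero_add x).symm
        _ ≤ n • x + x := add_le_add (nsmul_nonneg' hx n) le_rfl

private lemma inf_add_inf_aux {b c x : X} (hb : 0 ≤ b) (hc : 0 ≤ c) (hx : 0 ≤ x) :
    (b + x) ⊓ c ≤ (b ⊓ c) + (x ⊓ c) := by
  rw [← sub_le_iff_le_add]
  refine le_inf ?_ ?_
  · rw [sub_inf]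
    refine sup_le ?_ ?_
    · exact sub_le_iff_le_add.2 inf_le_left
    · exact (sub_nonpos.2 inf_le_right).trans hb
  · exact (sub_le_self _ (le_inf hx hc)).trans inf_le_right

private lemma disjoint_nsmul_inf {b c : X} (hb : 0 ≤ b) (hc : 0 ≤ c) (h : b ⊓ c = 0) :
    ∀ n : ℕ, (n • b) ⊓ c = 0
  | 0 => by rw [zero_nsmul]; exact inf_eq_left.2 hc
  | (n + 1) => by
      refine le_antisymm ?_ (le_inf (nsmul_nonneg' hb (n + 1)) hc)
      rw [succ_nsmul]
      calc (n • b + b) ⊓ c ≤ (n • b) ⊓ c + b ⊓ c :=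
            inf_add_inf_aux (nsmul_nonneg' hb n) hc hb
        _ = 0 := by rw [disjoint_nsmul_inf hb hc h n, h, add_zero]

private lemma nonneg_of_nsmul_nonneg {a : X} {n : ℕ} (hn : 0 < n) (h : 0 ≤ n • a) : 0 ≤ a := by
  have hd : a⁺ ⊓ a⁻ = 0 := posPart_inf_negPart_eq_zero a
  have h1 : n • a⁻ ≤ n • a⁺ := by
    rw [← sub_nonneg, ← nsmul_sub, posPart_sub_negPart]; exact h
  have h2 : a⁻ ≤ n • a⁻ := by
    obtain ⟨m, rfl⟩ : ∃ m, n = m + 1 := ⟨n - 1, (Nat.succ_pred_eq_of_pos hn).symm⟩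
    rw [succ_nsmul]
    calc a⁻ = 0 + a⁻ := (zero_add _).symm
      _ ≤ m • a⁻ + a⁻ := add_le_add (nsmul_nonneg' (negPart_nonneg a) m) le_rfl
  have hneg : a⁻ = 0 := by
    have hle : a⁻ ≤ n • a⁺ := h2.trans h1
    calc a⁻ = (n • a⁺) ⊓ a⁻ := (inf_eq_right.2 hle).symm
      _ = 0 := disjoint_nsmul_inf (posPart_nonneg a) (negPart_nonneg a) hd n
  rw [← posPart_sub_negPart a, hneg, sub_zero]
  exact posPart_nonneg a

private lemma nat_real_smul_nonneg {n : ℕ} {z : X} (hz : 0 ≤ z) : 0 ≤ (n : ℝ) • z := by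
  rw [Nat.cast_smul_eq_nsmul]; exact nsmul_nonneg' hz n

private lemma inv_nat_smul_nonneg {n : ℕ} (hn : 0 < n) {z : X} (hz : 0 ≤ z) :
    0 ≤ ((n : ℝ)⁻¹) • z := by
  refine nonneg_of_nsmul_nonneg hn ?_
  rw [← Nat.cast_smul_eq_nsmul ℝ, smul_smul,
    mul_inv_cancel₀ (Nat.cast_ne_zero.2 hn.ne' : (n : ℝ) ≠ 0), one_smul]
  exact hz

private lemma nat_real_smul_mono {n : ℕ} {x y : X} (h : x ≤ y) : (n : ℝ) • x ≤ (n : ℝ) • y := by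
  rw [← sub_nonneg, ← smul_sub]
  exact nat_real_smul_nonneg (sub_nonneg.2 h)

private lemma inv_nat_smul_mono {n : ℕ} (hn : 0 < n) {x y : X} (h : x ≤ y) :
    (n : ℝ)⁻¹ • x ≤ (n : ℝ)⁻¹ • y := by
  rw [← sub_nonneg, ← smul_sub]
  exact inv_nat_smul_nonneg hn (sub_nonneg.2 h)

private lemma nat_smul_sup {n : ℕ} (hn : 0 < n) (a b : X) :
    (n : ℝ) • (a ⊔ b) = ((n : ℝ) • a) ⊔ ((n : ℝ) • b) := by
  have hc : (n : ℝ) ≠ 0 := Nat.cast_ne_zero.2 hn.ne'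
  refine le_antisymm ?_ (sup_le (nat_real_smul_mono le_sup_left) (nat_real_smul_mono le_sup_right))
  have ha : a ≤ (n : ℝ)⁻¹ • (((n : ℝ) • a) ⊔ ((n : ℝ) • b)) := by
    calc a = (n : ℝ)⁻¹ • ((n : ℝ) • a) := by rw [smul_smul, inv_mul_cancel₀ hc, one_smul]
      _ ≤ _ := inv_nat_smul_mono hn le_sup_left
  have hb : b ≤ (n : ℝ)⁻¹ • (((n : ℝ) • a) ⊔ ((n : ℝ) • b)) := by
    calc b = (n : ℝ)⁻¹ • ((n : ℝ) • b) := by rw [smul_smul, inv_mul_cancel₀ hc, one_smul]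
      _ ≤ _ := inv_nat_smul_mono hn le_sup_right
  have := nat_real_smul_mono (n := n) (sup_le ha hb)
  rwa [smul_smul, mul_inv_cancel₀ hc, one_smul] at this

private lemma nat_smul_abs {n : ℕ} (hn : 0 < n) (x : X) : |(n : ℝ) • x| = (n : ℝ) • |x| := by
  show ((n : ℝ) • x) ⊔ (-((n : ℝ) • x)) = (n : ℝ) • (x ⊔ -x)
  rw [← smul_neg, ← nat_smul_sup hn]

private lemma solid_abs_mem {S : Set X} (hS : IsSolidSet S) {w : X} (hw : w ∈ S) : |w| ∈ S :=
  hS w hw |w| (by rw [abs_abs])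

private lemma solid_mem_of_le {S : Set X} (hS : IsSolidSet S) {m y : X} (hm : m ∈ S)
    (h0 : 0 ≤ m) (hy : |y| ≤ m) : y ∈ S :=
  hS m hm y (by rwa [abs_of_nonneg h0])

private lemma abs_sup_sub_sup_le (a b c d : X) :
    |(a ⊔ b) - (c ⊔ d)| ≤ |a - c| ⊔ |b - d| := by
  have H : ∀ p q r s : X, (p ⊔ q) - (r ⊔ s) ≤ |p - r| ⊔ |q - s| := by
    intro p q r s
    rw [sub_le_iff_le_add]
    refine sup_le ?_ ?_
    · calc p = r + (p - r) := (add_sub_cancel r p).symm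
        _ ≤ r + (|p - r| ⊔ |q - s|) :=
            add_le_add_right ((le_abs_self _).trans le_sup_left) r
        _ ≤ (r ⊔ s) + (|p - r| ⊔ |q - s|) := add_le_add le_sup_left le_rfl
        _ = (|p - r| ⊔ |q - s|) + (r ⊔ s) := add_comm _ _
    · calc q = s + (q - s) := (add_sub_cancel s q).symm
        _ ≤ s + (|p - r| ⊔ |q - s|) :=
            add_le_add_right ((le_abs_self _).trans le_sup_right) s
        _ ≤ (r ⊔ s) + (|p - r| ⊔ |q - s|) := add_le_add le_sup_right le_rfl
        _ = (|p - r| ⊔ |q - s|) + (r ⊔ s) := add_comm _ _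
  rw [abs_le']
  refine ⟨H a b c d, ?_⟩
  rw [neg_sub]
  have := H c d a b
  rwa [abs_sub_comm c a, abs_sub_comm d b] at this

private lemma abs_sup'_sub_sup'_le {ι : Type*} (t : Finset ι) (ht : t.Nonempty) (f g : ι → X) :
    |t.sup' ht f - t.sup' ht g| ≤ t.sup' ht fun i => |f i - g i| := by
  induction ht using Finset.Nonempty.cons_induction with
  | singleton a => simp
  | cons a s h hs ih =>
      rw [Finset.sup'_cons hs, Finset.sup'_cons hs, Finset.sup'_cons hs]
      exact (abs_sup_sub_sup_le _ _ _ _).trans (sup_le_sup_left ih _)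

private lemma isClosedNonnegCone (hls : LocallySolid X) : IsClosed {y : X | 0 ≤ y} := by
  rw [← closure_subset_iff_isClosed]
  intro x hx
  have key : ∀ V ∈ 𝓝 (0 : X), x⁻ ∈ V := by
    intro V hV
    obtain ⟨W, hW, hWs, hWV⟩ := hls V hV
    have hcont : Filter.Tendsto (fun y => x - y) (𝓝 x) (𝓝 (0 : X)) := by
      have h1 : Filter.Tendsto (fun y => x - y) (𝓝 x) (𝓝 (x - x)) :=
        Filter.Tendsto.sub tendsto_const_nhds tendsto_id
      rwa [sub_self] at h1
    have hU : (fun y => x - y) ⁻¹' W ∈ 𝓝 x := hcont hW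
    obtain ⟨y, hyU, hy0⟩ := mem_closure_iff_nhds.1 hx _ hU
    have hle : x⁻ ≤ |x - y| := by
      have h1 : -x ≤ y - x := by
        have : -y ≤ 0 := neg_nonpos.2 hy0
        calc -x = -y + (y - x) := by abel
          _ ≤ 0 + (y - x) := add_le_add this le_rfl
          _ = y - x := zero_add _
      calc x⁻ = (-x) ⊔ 0 := by rw [negPart_def]
        _ ≤ (y - x) ⊔ 0 := sup_le_sup_right h1 0
        _ ≤ |y - x| ⊔ 0 := sup_le_sup_right (le_abs_self _) 0
        _ = |y - x| := sup_eq_left.2 (abs_nonneg _)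
        _ = |x - y| := abs_sub_comm y x
    refine hWV (hWs (x - y) hyU (x⁻) ?_)
    rwa [abs_of_nonneg (negPart_nonneg x)]
  have hzero : x⁻ = 0 := by
    by_contra hne
    have : (0 : X) ∈ ({x⁻}ᶜ : Set X) := fun h => hne (Set.mem_singleton_iff.1 h).symm
    have hmem : ({x⁻}ᶜ : Set X) ∈ 𝓝 (0 : X) := (isOpen_compl_singleton).mem_nhds this
    exact (key _ hmem) rfl
  exact negPart_eq_zero.1 hzero

private lemma isClosedConstLe (hls : LocallySolid X) (d : X) : IsClosed {y : X | d ≤ y} := by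
  have : {y : X | d ≤ y} = (fun y => y - d) ⁻¹' {z : X | 0 ≤ z} := by
    ext y; simp [sub_nonneg]
  rw [this]
  exact (isClosedNonnegCone hls).preimage (continuous_id.sub continuous_const)

private lemma isClosedLeConst (hls : LocallySolid X) (u : X) : IsClosed {y : X | y ≤ u} := by
  have : {y : X | y ≤ u} = (fun y => u - y) ⁻¹' {z : X | 0 ≤ z} := by
    ext y; simp [sub_nonneg]
  rw [this]
  exact (isClosedNonnegCone hls).preimage (continuous_const.sub continuous_id)

private lemma balanced_scale_mono {U : Set X} (hU : Balanced ℝ U) {a b : ℝ} (ha : 0 < a)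
    (hab : a ≤ b) : a • U ⊆ b • U := by
  have hb : 0 < b := ha.trans_le hab
  rintro x ⟨u, hu, rfl⟩
  refine ⟨(a / b) • u, hU (a / b) ?_ ⟨u, hu, rfl⟩, ?_⟩
  · rw [Real.norm_eq_abs, abs_of_nonneg (div_nonneg ha.le hb.le)]
    exact (div_le_one hb).2 hab
  · show b • ((a / b) • u) = a • u
    rw [smul_smul]
    congr 1
    field_simp

private lemma totBounded_nat_bound {B : Set X} (hB : TotBounded B) {V : Set X}
    (hV : V ∈ 𝓝 (0 : X)) : ∃ n : ℕ, 0 < n ∧ B ⊆ (n : ℝ) • V := by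
  obtain ⟨V₂, hV₂, hV₂V⟩ := exists_nhds_zero_half hV
  obtain ⟨U, ⟨hU0, hUb⟩, hUV₂⟩ := (nhds_basis_balanced ℝ X).mem_iff.1 hV₂
  obtain ⟨F, hF⟩ := hB U hU0
  have habs : ∀ f : X, ∃ r : ℝ, ∀ c : ℝ, r ≤ ‖c‖ → f ∈ c • U := by
    intro f
    obtain ⟨r, hr⟩ := absorbs_iff_norm.1 (absorbent_nhds_zero (𝕜 := ℝ) hU0 f)
    exact ⟨r, fun c hc => Set.singleton_subset_iff.1 (hr c hc)⟩
  choose r hr using habs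
  refine ⟨max 1 (F.sup fun f => ⌈r f⌉₊), lt_of_lt_of_le one_pos (le_max_left _ _), ?_⟩
  set n : ℕ := max 1 (F.sup fun f => ⌈r f⌉₊) with hn
  have hn1 : (1 : ℝ) ≤ (n : ℝ) := by exact_mod_cast le_max_left 1 _
  intro x hx
  obtain ⟨f, hf, u, hu, rfl⟩ := Set.mem_add.1 (hF hx)
  have h1 : f ∈ (n : ℝ) • U := by
    refine hr f (n : ℝ) ?_
    rw [Real.norm_natCast]
    calc r f ≤ (⌈r f⌉₊ : ℝ) := Nat.le_ceil _
      _ ≤ (n : ℝ) := by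
          exact_mod_cast le_trans (Finset.le_sup (f := fun f => ⌈r f⌉₊) hf) (le_max_right 1 _)
  have h2 : u ∈ (n : ℝ) • U := by
    refine balanced_scale_mono hUb (one_pos : (0:ℝ) < 1) hn1 ?_
    exact Set.mem_smul_set.2 ⟨u, hu, one_smul ℝ u⟩
  obtain ⟨u1, hu1, hfu1⟩ := Set.mem_smul_set.1 h1
  obtain ⟨u2, hu2, hfu2⟩ := Set.mem_smul_set.1 h2
  refine Set.mem_smul_set.2 ⟨u1 + u2, hV₂V _ (hUV₂ hu1) _ (hUV₂ hu2), ?_⟩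
  rw [smul_add, hfu1, hfu2]

private lemma totBounded_union {A C : Set X} (hA : TotBounded A) (hC : TotBounded C) :
    TotBounded (A ∪ C) := by
  classical
  intro V hV
  obtain ⟨F1, h1⟩ := hA V hV
  obtain ⟨F2, h2⟩ := hC V hV
  refine ⟨F1 ∪ F2, ?_⟩
  rintro x (hx | hx)
  · obtain ⟨f, hf, v, hv, rfl⟩ := Set.mem_add.1 (h1 hx)
    exact Set.mem_add.2 ⟨f, by simp [hf], v, hv, rfl⟩
  · obtain ⟨f, hf, v, hv, rfl⟩ := Set.mem_add.1 (h2 hx)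
    exact Set.mem_add.2 ⟨f, by simp [hf], v, hv, rfl⟩

private lemma totBounded_finset (F : Finset X) : TotBounded (↑F : Set X) := by
  intro V hV
  exact ⟨F, fun x hx => Set.mem_add.2 ⟨x, hx, 0, mem_of_mem_nhds hV, add_zero x⟩⟩


private lemma amDef (ham : AMProperty X) : ∀ B : Set X, VBounded B → ∀ V ∈ 𝓝 (0 : X),
    ∀ α : ℝ, 0 < α → B ⊆ α • V → supClosure B ⊆ α • V := ham


/-- Under the AM-property, if closures of totally bounded sets are compact, a nonempty
totally bounded set has a supremum lying in the closure of its sup-closure. -/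
theorem exists_isLUB_of_totBounded (hls : LocallySolid X) (ham : AMProperty X)
    (hcl : ∀ S : Set X, TotBounded S → IsCompact (closure S))
    (B : Set X) (hne : B.Nonempty) (hB : TotBounded B) :
    ∃ g : X, IsLUB B g ∧ g ∈ closure (supClosure B) := by
  classical
  -- Step 1: supClosure B is totally bounded
  have hKtb : TotBounded (supClosure B) := by
    intro V hV
    obtain ⟨W, hW, hWs, hWV⟩ := hls V hV
    obtain ⟨F, hF⟩ := hB W hW
    have hchoice : ∀ x, x ∈ B → ∃ y, y ∈ (↑F : Set X) ∧ x - y ∈ W := by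
      intro x hx
      obtain ⟨y, hy, w, hw, hxy⟩ := Set.mem_add.1 (hF hx)
      exact ⟨y, hy, by rw [← hxy, add_sub_cancel_left]; exact hw⟩
    choose! φ hφF hφW using hchoice
    set D : Set X := (fun x => |x - φ x|) '' B with hD
    have hDW : D ⊆ W := by
      rintro d ⟨x, hx, rfl⟩
      exact solid_abs_mem hWs (hφW x hx)
    have hDb : VBounded D := by
      intro V' hV'
      obtain ⟨S, hS0, hSs, hSV'⟩ := hls V' hV'
      obtain ⟨V₂, hV₂, hV₂S⟩ := exists_nhds_zero_half hS0
      obtain ⟨U, ⟨hU0, hUb⟩, hUV₂⟩ := (nhds_basis_balanced ℝ X).mem_iff.1 hV₂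
      have hB' : TotBounded (B ∪ ↑F) := totBounded_union hB (totBounded_finset F)
      obtain ⟨n, hn, hsub⟩ := totBounded_nat_bound hB' hU0
      refine ⟨(n : ℝ), by exact_mod_cast hn, ?_⟩
      rintro d ⟨x, hx, rfl⟩
      obtain ⟨u1, hu1, hx1⟩ := Set.mem_smul_set.1 (hsub (Or.inl hx))
      obtain ⟨u2, hu2, hx2⟩ := Set.mem_smul_set.1 (hsub (Or.inr (hφF x hx)))
      have hdiff : x - φ x = (n : ℝ) • (u1 - u2) := by rw [smul_sub, hx1, hx2]
      have hu12 : u1 - u2 ∈ S := by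
        have hnu2 : -u2 ∈ U := by
          have := hUb (-1) (by norm_num) (Set.smul_mem_smul_set hu2)
          rwa [neg_one_smul] at this
        have := hV₂S _ (hUV₂ hu1) _ (hUV₂ hnu2)
        rwa [← sub_eq_add_neg] at this
      have habs : |x - φ x| = (n : ℝ) • |u1 - u2| := by rw [hdiff, nat_smul_abs hn]
      refine Set.smul_set_mono hSV' ?_
      exact Set.mem_smul_set.2 ⟨|u1 - u2|, solid_abs_mem hSs hu12, habs.symm⟩
    have hAM : supClosure D ⊆ W := by
      have h1W : D ⊆ (1 : ℝ) • W := fun d hd => Set.mem_smul_set.2 ⟨d, hDW hd, one_smul ℝ d⟩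
      have hsc := amDef ham D hDb W hW 1 one_pos h1W
      intro z hz
      obtain ⟨w, hw, hwz⟩ := Set.mem_smul_set.1 (hsc hz)
      rw [one_smul] at hwz
      exact hwz ▸ hw
    have hGfin : (supClosure (↑F : Set X)).Finite := F.finite_toSet.supClosure
    refine ⟨hGfin.toFinset, ?_⟩
    rintro k hk
    obtain ⟨t, ht, htB, rfl⟩ := hk
    have hg' : t.sup' ht φ ∈ supClosure (↑F : Set X) :=
      finsetSup'_mem_supClosure ht fun i hi => hφF i (htB hi)
    have hm : t.sup' ht (fun i => |i - φ i|) ∈ supClosure D :=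
      finsetSup'_mem_supClosure ht fun i hi => ⟨i, htB hi, rfl⟩
    have hmW : t.sup' ht (fun i => |i - φ i|) ∈ W := hAM hm
    have hm0 : (0 : X) ≤ t.sup' ht fun i => |i - φ i| := by
      obtain ⟨i, hi⟩ := ht
      exact le_trans (abs_nonneg (i - φ i)) (Finset.le_sup' (fun i => |i - φ i|) hi)
    have hkey : |t.sup' ht id - t.sup' ht φ| ≤ t.sup' ht fun i => |i - φ i| :=
      abs_sup'_sub_sup'_le t ht id φ
    have hdk : t.sup' ht id - t.sup' ht φ ∈ W := solid_mem_of_le hWs hmW hm0 hkey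
    refine Set.mem_add.2 ⟨t.sup' ht φ, ?_, _, hWV hdk, by abel⟩
    exact hGfin.mem_toFinset.2 hg'
  -- Step 2: compactness and cluster point
  have hK : IsCompact (closure (supClosure B)) := hcl _ hKtb
  haveI : Nonempty ↥(supClosure B) := ⟨⟨hne.choose, subset_supClosure hne.choose_spec⟩⟩
  letI : SemilatticeSup ↥(supClosure B) :=
    Subtype.semilatticeSup fun x y hx hy => supClosed_supClosure hx hy
  let f : ↥(supClosure B) → X := Subtype.val
  have hmap : Filter.map f atTop ≤ 𝓟 (closure (supClosure B)) := by
    rw [le_principal_iff, mem_map]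
    exact Filter.Eventually.of_forall fun x => subset_closure x.2
  obtain ⟨g, hgcl, hgclus⟩ := hK hmap
  have hub : ∀ d ∈ supClosure B, d ≤ g := by
    intro d hd
    have hev : {y : X | d ≤ y} ∈ Filter.map f atTop := by
      rw [mem_map]
      filter_upwards [eventually_ge_atTop (⟨d, hd⟩ : ↥(supClosure B))] with x hx
      exact hx
    have hc : ClusterPt g (𝓟 {y : X | d ≤ y}) := hgclus.mono (le_principal_iff.2 hev)
    have hgm : g ∈ closure {y : X | d ≤ y} := mem_closure_iff_clusterPt.2 hc
    rwa [(isClosedConstLe hls d).closure_eq] at hgm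
  refine ⟨g, ⟨fun b hb => hub b (subset_supClosure hb), ?_⟩, hgcl⟩
  intro u hu
  have hKle : supClosure B ⊆ {y : X | y ≤ u} := by
    have hub' : u ∈ upperBounds (supClosure B) := by
      rw [upperBounds_supClosure]; exact hu
    exact fun k hk => hub' hk
  have := closure_mono hKle hgcl
  rwa [(isClosedLeConst hls u).closure_eq] at this
end

section
/- Let X be a locally solid vector lattice with the AM-property, and let (g_α) be an increasing net contained in a set whose closure is compact. Then (g_α) has a supremum g in X, and g lies in the closure of the set; moreover some subnet of (g_α) converges to g. -/
open Filter Topology Set Pointwise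

/-- An increasing net in a set with compact closure has a supremum in the closure,
to which some subnet converges. -/
theorem increasing_net_compact_closure {X : Type*} [AddCommGroup X] [Lattice X] [Module ℝ X]
    [TopologicalSpace X] [IsTopologicalAddGroup X] [ContinuousSMul ℝ X]
    [CovariantClass X X (· + ·) (· ≤ ·)] [T2Space X]
    {ι : Type*} [Preorder ι] [IsDirected ι (· ≤ ·)] [Nonempty ι]
    (hls : LocallySolid X) (ham : AMProperty X)
    (g : ι → X) (hmono : Monotone g) (S : Set X) (hgS : ∀ i, g i ∈ S)
    (hcomp : IsCompact (closure S)) :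
    ∃ x : X, IsLUB (Set.range g) x ∧ x ∈ closure S ∧ MapClusterPt x atTop g := by
  have hmap : Filter.map g atTop ≤ 𝓟 (closure S) := by
    rw [Filter.le_principal_iff]
    exact Filter.mem_map.mpr (Filter.Eventually.of_forall fun i => subset_closure (hgS i))
  obtain ⟨x, hxS, hx⟩ := hcomp.exists_clusterPt hmap
  have hx' : MapClusterPt x atTop g := hx
  -- frequently, x - g j is in any neighborhood of 0
  have hfreq : ∀ V ∈ 𝓝 (0 : X), ∀ i₀ : ι, ∃ j, i₀ ≤ j ∧ x - g j ∈ V := by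
    intro V hV i₀
    have hcont : Filter.Tendsto (fun y => x - y) (𝓝 x) (𝓝 (0 : X)) := by
      simpa using ((tendsto_id (x := 𝓝 x)).const_sub x)
    have hmem : (fun y => x - y) ⁻¹' V ∈ 𝓝 x := hcont hV
    have := (mapClusterPt_iff_frequently.mp hx') _ hmem
    rw [frequently_atTop] at this
    obtain ⟨j, hj, hjV⟩ := this i₀
    exact ⟨j, hj, hjV⟩
  -- key: anything dominated eventually by |x - g j| is zero
  have key : ∀ y : X, (∃ i₀ : ι, ∀ j, i₀ ≤ j → |y| ≤ |x - g j|) → y = 0 := by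
    rintro y ⟨i₀, hy⟩
    have hmem : ∀ U ∈ 𝓝 (0 : X), y ∈ U := by
      intro U hU
      obtain ⟨W, hW, hWsolid, hWU⟩ := hls U hU
      obtain ⟨j, hj, hjW⟩ := hfreq W hW i₀
      exact hWU (hWsolid _ hjW y (hy j hj))
    have : y ⤳ (0 : X) := specializes_iff_pure.mpr hmem
    exact this.eq
  refine ⟨x, ⟨?_, ?_⟩, hxS, hx'⟩
  · rintro _ ⟨i, rfl⟩
    have h0 : (g i - x)⁺ = 0 := by
      refine key _ ⟨i, fun j hj => ?_⟩
      have hz : (g i - g j)⁺ = 0 := posPart_eq_zero.mpr (sub_nonpos.mpr (hmono hj))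
      calc |(g i - x)⁺| = |(g i - x) ⊔ 0 - (g i - g j) ⊔ 0| := by
            rw [← posPart_def, ← posPart_def, hz, sub_zero]
        _ ≤ |(g i - x) - (g i - g j)| := abs_sup_sub_sup_le_abs _ _ _
        _ = |x - g j| := by rw [show g i - x - (g i - g j) = -(x - g j) by abel, abs_neg]
    exact sub_nonpos.mp (posPart_eq_zero.mp h0)
  · intro b hb
    have h0 : (x - b)⁺ = 0 := by
      inhabit ι
      refine key _ ⟨default, fun j _ => ?_⟩
      have hz : (g j - b)⁺ = 0 :=
        posPart_eq_zero.mpr (sub_nonpos.mpr (hb ⟨j, rfl⟩))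
      calc |(x - b)⁺| = |(x - b) ⊔ 0 - (g j - b) ⊔ 0| := by
            rw [← posPart_def, ← posPart_def, hz, sub_zero]
        _ ≤ |(x - b) - (g j - b)| := abs_sup_sub_sup_le_abs _ _ _
        _ = |x - g j| := by rw [show x - b - (g j - b) = x - g j by abel]
    exact sub_nonpos.mp (posPart_eq_zero.mp h0)
end

section
/- (Krengel's theorem for bb-compact operators) Let X and Y be Hausdorff locally solid vector lattices such that Y has the AM-property and closures of totally bounded sets in Y are compact. If T: X → Y is a bb-compact linear operator, then the modulus |T| exists and is also bb-compact. -/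
open Filter Topology Set Pointwise

variable {X Y : Type*}
  [AddCommGroup X] [Lattice X] [Module ℝ X] [TopologicalSpace X]
  [IsTopologicalAddGroup X] [ContinuousSMul ℝ X] [CovariantClass X X (· + ·) (· ≤ ·)] [T2Space X]
  [AddCommGroup Y] [Lattice Y] [Module ℝ Y] [TopologicalSpace Y]
  [IsTopologicalAddGroup Y] [ContinuousSMul ℝ Y] [CovariantClass Y Y (· + ·) (· ≤ ·)] [T2Space Y]

namespace Krengel
variable {E : Type*} [AddCommGroup E] [Lattice E] [Module ℝ E] [TopologicalSpace E]
  [IsTopologicalAddGroup E] [ContinuousSMul ℝ E] [CovariantClass E E (· + ·) (· ≤ ·)] [T2Space E]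

lemma solid_neg_mem {U : Set E} (hU : IsSolidSet U) {x : E} (hx : x ∈ U) : -x ∈ U :=
  hU x hx (-x) (by rw [abs_neg])

lemma posPart_le_abs' (a : E) : a⁺ ≤ |a| := by
  rw [posPart_def]; exact sup_le (le_abs_self a) (abs_nonneg a)

lemma negPart_le_abs' (a : E) : a⁻ ≤ |a| := by
  rw [← posPart_neg, ← abs_neg]; exact posPart_le_abs' (-a)

lemma nsmul_nonneg' {a : E} (ha : 0 ≤ a) : ∀ n : ℕ, 0 ≤ n • a := by
  intro n; induction n with
  | zero => simp
  | succ k ih => rw [succ_nsmul]; exact add_nonneg ih ha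

lemma inf_add_le' {a b c : E} (ha : 0 ≤ a) (hb : 0 ≤ b) (hc : 0 ≤ c) :
    a ⊓ (b + c) ≤ a ⊓ b + a ⊓ c := by
  rw [← sub_le_iff_le_add']
  rw [sub_inf]
  apply sup_le
  · exact le_trans (by simpa using inf_le_left) (le_inf ha hc)
  · exact le_inf (le_trans (sub_le_sub inf_le_left hb) (by simp))
      (by simpa using sub_le_sub_right (inf_le_right : a ⊓ (b+c) ≤ b + c) b)

lemma nonneg_of_nsmul_nonneg {n : ℕ} (hn : n ≠ 0) {a : E} (h : 0 ≤ n • a) : 0 ≤ a := by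
  have hd : a⁻ ⊓ a⁺ = 0 := by rw [inf_comm]; exact posPart_inf_negPart_eq_zero a
  have hk : ∀ k : ℕ, a⁻ ⊓ (k • a⁺) = 0 := by
    intro k; induction k with
    | zero => simpa using inf_eq_right.2 (negPart_nonneg a)
    | succ m ih =>
        have h1 : a⁻ ⊓ ((m + 1) • a⁺) ≤ 0 := by
          rw [succ_nsmul]
          calc a⁻ ⊓ (m • a⁺ + a⁺) ≤ a⁻ ⊓ (m • a⁺) + a⁻ ⊓ a⁺ :=
                inf_add_le' (negPart_nonneg a) (nsmul_nonneg' (posPart_nonneg a) m)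
                  (posPart_nonneg a)
            _ = 0 := by rw [ih, hd, add_zero]
        exact le_antisymm h1 (le_inf (negPart_nonneg a)
          (nsmul_nonneg' (posPart_nonneg a) (m+1)))
  obtain ⟨m, rfl⟩ := Nat.exists_eq_succ_of_ne_zero hn
  have h2 : (m+1) • a⁻ ≤ (m+1) • a⁺ := by
    have : 0 ≤ (m+1) • a⁺ - (m+1) • a⁻ := by
      rwa [← smul_sub, posPart_sub_negPart]
    exact sub_nonneg.1 this
  have h3 : a⁻ ≤ (m+1) • a⁻ := by
    rw [succ_nsmul]; exact le_add_of_nonneg_left (nsmul_nonneg' (negPart_nonneg a) m)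
  have h4 : a⁻ ≤ 0 := by
    calc a⁻ = a⁻ ⊓ ((m+1) • a⁻) := (inf_eq_left.2 h3).symm
      _ ≤ a⁻ ⊓ ((m+1) • a⁺) := inf_le_inf_left _ h2
      _ = 0 := hk (m+1)
  exact negPart_eq_zero.1 (le_antisymm h4 (negPart_nonneg a))

lemma isClosed_nonneg (hls : LocallySolid E) : IsClosed {x : E | 0 ≤ x} := by
  apply closure_subset_iff_isClosed.mp
  intro x hx
  suffices h : x⁻ = 0 by exact negPart_eq_zero.1 h
  by_contra hne
  have hV : ({x⁻}ᶜ : Set E) ∈ 𝓝 (0 : E) :=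
    IsOpen.mem_nhds isClosed_singleton.isOpen_compl (by simpa using Ne.symm hne)
  obtain ⟨U, hU, hUs, hUV⟩ := hls _ hV
  have hN : (fun y => y - x) ⁻¹' U ∈ 𝓝 x :=
    (continuous_id.sub continuous_const).continuousAt.preimage_mem_nhds (by simpa using hU)
  obtain ⟨y, hyN, hy0⟩ := mem_closure_iff_nhds.1 hx _ hN
  have h1 : |x⁻ - y⁻| ≤ |y - x| := by
    have h := abs_sup_sub_sup_le_abs (-x) (-y) (0 : E)
    rw [neg_sub_neg] at h
    simpa [negPart_def] using h
  have h2 : |x⁻| ≤ |y - x| := by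
    rw [negPart_eq_zero.2 hy0, sub_zero] at h1; exact h1
  have hmem : x⁻ ∈ U := hUs _ hyN _ (by show |x⁻| ≤ |y - x|; exact h2)
  exact hUV hmem rfl

lemma smul_nonneg₀ (hls : LocallySolid E) {c : ℝ} (hc : 0 ≤ c) {x : E} (hx : 0 ≤ x) :
    0 ≤ c • x := by
  set Cl : Set ℝ := (fun t : ℝ => t • x) ⁻¹' {z : E | 0 ≤ z} with hCl
  have hclosed : IsClosed Cl :=
    (isClosed_nonneg hls).preimage (continuous_id.smul continuous_const)
  have hq : ∀ q : ℚ, 0 ≤ q → (q : ℝ) ∈ Cl := by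
    intro q hq0
    have hnum : ((q.num.toNat : ℝ)) = (q.num : ℝ) := by
      exact_mod_cast congrArg (Int.cast : ℤ → ℝ) (Int.toNat_of_nonneg (Rat.num_nonneg.2 hq0))
    have hmul : ((q.den : ℝ)) * (q : ℝ) = (q.num : ℝ) := by
      have : (q : ℚ) * q.den = q.num := Rat.mul_den_eq_num q
      have h' := congrArg (Rat.cast : ℚ → ℝ) this
      push_cast at h'
      linarith [h']
    have key : (q.den : ℕ) • ((q : ℝ) • x) = (q.num.toNat : ℕ) • x := by
      rw [← Nat.cast_smul_eq_nsmul ℝ, ← Nat.cast_smul_eq_nsmul ℝ, smul_smul, hmul, hnum]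
    have h0 : 0 ≤ (q.den : ℕ) • ((q : ℝ) • x) := by
      rw [key]; exact nsmul_nonneg' hx _
    exact nonneg_of_nsmul_nonneg q.den_nz h0
  have hsub : c ∈ closure ((Rat.cast : ℚ → ℝ) '' {q : ℚ | 0 ≤ q}) := by
    rw [mem_closure_iff_nhds]
    intro N hN
    obtain ⟨ε, hε, hball⟩ := Metric.mem_nhds_iff.1 hN
    obtain ⟨q, hq1, hq2⟩ := exists_rat_btwn (show c < c + ε by linarith)
    refine ⟨(q : ℝ), hball ?_, ⟨q, le_of_lt (by exact_mod_cast lt_of_le_of_lt hc hq1), rfl⟩⟩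
    rw [Metric.mem_ball, Real.dist_eq, abs_of_pos (by linarith)]
    linarith
  have : c ∈ Cl := by
    have h5 : ((Rat.cast : ℚ → ℝ) '' {q : ℚ | 0 ≤ q}) ⊆ Cl := by
      rintro _ ⟨q, hq0, rfl⟩; exact hq q hq0
    exact hclosed.closure_subset_iff.2 h5 hsub
  exact this

lemma smul_le_smul_c (hls : LocallySolid E) {c : ℝ} (hc : 0 ≤ c) {a b : E} (h : a ≤ b) :
    c • a ≤ c • b := by
  have := smul_nonneg₀ hls hc (sub_nonneg.2 h)
  rw [smul_sub] at this
  exact sub_nonneg.1 this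

lemma smul_sup_c (hls : LocallySolid E) {c : ℝ} (hc : 0 < c) (a b : E) :
    c • (a ⊔ b) = c • a ⊔ c • b := by
  apply le_antisymm
  · have h1 : a ⊔ b ≤ c⁻¹ • (c • a ⊔ c • b) := by
      apply sup_le
      · have := smul_le_smul_c hls (le_of_lt (inv_pos.2 hc)) (le_sup_left (a := c • a) (b := c • b))
        rwa [inv_smul_smul₀ hc.ne'] at this
      · have := smul_le_smul_c hls (le_of_lt (inv_pos.2 hc)) (le_sup_right (a := c • a) (b := c • b))
        rwa [inv_smul_smul₀ hc.ne'] at this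
    have := smul_le_smul_c hls hc.le h1
    rwa [smul_inv_smul₀ hc.ne'] at this
  · exact sup_le (smul_le_smul_c hls hc.le le_sup_left) (smul_le_smul_c hls hc.le le_sup_right)

lemma smul_abs_c (hls : LocallySolid E) {c : ℝ} (hc : 0 ≤ c) (a : E) : |c • a| = c • |a| := by
  rcases hc.eq_or_lt with h | h
  · simp [← h]
  · show (c • a) ⊔ -(c • a) = c • (a ⊔ -a)
    rw [smul_sup_c hls h, smul_neg]

lemma smul_posPart_c (hls : LocallySolid E) {c : ℝ} (hc : 0 < c) (a : E) : (c • a)⁺ = c • a⁺ := by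
  rw [posPart_def, posPart_def, smul_sup_c hls hc, smul_zero]

lemma smul_negPart_c (hls : LocallySolid E) {c : ℝ} (hc : 0 < c) (a : E) : (c • a)⁻ = c • a⁻ := by
  rw [negPart_def, negPart_def, smul_sup_c hls hc, smul_zero, smul_neg]

lemma solid_smul_subset (hls : LocallySolid E) {U : Set E} (hU : IsSolidSet U) {c d : ℝ}
    (hc : 0 < c) (hcd : c ≤ d) : c • U ⊆ d • U := by
  have hd : 0 < d := lt_of_lt_of_le hc hcd
  intro x hx
  obtain ⟨u, hu, rfl⟩ := hx
  rw [mem_smul_set_iff_inv_smul_mem₀ hd.ne']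
  refine hU u hu _ ?_
  rw [smul_smul, smul_abs_c hls (by positivity)]
  have h1 : (0:ℝ) ≤ 1 - d⁻¹ * c := by
    rw [sub_nonneg]
    calc d⁻¹ * c ≤ d⁻¹ * d := by apply mul_le_mul_of_nonneg_left hcd (by positivity)
      _ = 1 := by field_simp
  have h2 := smul_nonneg₀ hls h1 (abs_nonneg u)
  rw [sub_smul, one_smul] at h2
  exact sub_nonneg.1 h2

lemma exists_pos_smul_mem {V : Set E} (hV : V ∈ 𝓝 (0 : E)) (x : E) :
    ∃ c : ℝ, 0 < c ∧ x ∈ c • V := by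
  obtain ⟨r, hr, hc⟩ := ((absorbent_nhds_zero hV : Absorbent ℝ V) x).exists_pos
  refine ⟨max r 1, lt_of_lt_of_le hr (le_max_left _ _), ?_⟩
  have := hc (max r 1) (by rw [Real.norm_eq_abs, abs_of_pos (by positivity)]; exact le_max_left _ _)
  exact this rfl

lemma vbounded_mono {A B : Set E} (h : A ⊆ B) (hB : VBounded B) : VBounded A := by
  intro V hV; obtain ⟨α, hα, hs⟩ := hB V hV; exact ⟨α, hα, h.trans hs⟩

lemma vbounded_finset (hls : LocallySolid E) (F : Finset E) : VBounded (↑F : Set E) := by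
  intro V hV
  obtain ⟨U, hU, hUs, hUV⟩ := hls _ hV
  have h : ∀ f ∈ F, ∃ c : ℝ, 0 < c ∧ f ∈ c • U := fun f _ => exists_pos_smul_mem hU f
  choose! c hc hcm using h
  set α : ℝ := 1 + ∑ f ∈ F, c f with hα
  have hαpos : 0 < α := by
    have : (0:ℝ) ≤ ∑ f ∈ F, c f := Finset.sum_nonneg fun f hf => (hc f hf).le
    positivity
  refine ⟨α, hαpos, ?_⟩
  intro f hf
  have h1 : c f ≤ α := by
    have h2 : c f ≤ ∑ g ∈ F, c g :=
      Finset.single_le_sum (fun g hg => (hc g hg).le) hf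
    linarith
  exact smul_set_mono hUV (solid_smul_subset hls hUs (hc f hf) h1 (hcm f hf))

lemma totBounded_vbounded (hls : LocallySolid E) {A : Set E} (hA : TotBounded A) :
    VBounded A := by
  intro W hW
  obtain ⟨W₁, hW₁, hW₁s⟩ := exists_nhds_zero_half hW
  obtain ⟨U, hU, hUs, hUW₁⟩ := hls _ hW₁
  obtain ⟨F, hF⟩ := hA U hU
  obtain ⟨α, hαpos, hFα⟩ := vbounded_finset hls F U hU
  set β : ℝ := max α 1 with hβ
  have hβpos : (0:ℝ) < β := lt_of_lt_of_le hαpos (le_max_left _ _)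
  refine ⟨β, hβpos, ?_⟩
  have hUβ : U ⊆ β • U := by
    have := solid_smul_subset hls hUs one_pos (le_max_right α 1)
    rwa [one_smul] at this
  have hFβ : (↑F : Set E) ⊆ β • U :=
    hFα.trans (solid_smul_subset hls hUs hαpos (le_max_left _ _))
  calc A ⊆ ↑F + U := hF
    _ ⊆ β • U + β • U := add_subset_add hFβ hUβ
    _ = β • (U + U) := (smul_add β U U).symm
    _ ⊆ β • W := by
        apply smul_set_mono
        intro z hz
        obtain ⟨u, hu, v, hv, rfl⟩ := hz
        exact hW₁s u (hUW₁ hu) v (hUW₁ hv)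

lemma vbounded_interval (hls : LocallySolid E) (x : E) : VBounded {z : E | |z| ≤ x} := by
  intro V hV
  obtain ⟨U, hU, hUs, hUV⟩ := hls _ hV
  obtain ⟨c, hc, hxc⟩ := exists_pos_smul_mem hU x
  refine ⟨c, hc, ?_⟩
  intro z hz
  apply smul_set_mono hUV
  rw [mem_smul_set_iff_inv_smul_mem₀ hc.ne'] at hxc ⊢
  refine hUs _ hxc _ ?_
  rw [smul_abs_c hls (by positivity), smul_abs_c hls (by positivity)]
  exact smul_le_smul_c hls (by positivity) (le_trans hz (le_abs_self x))

lemma vbounded_solidHull (hls : LocallySolid E) {B : Set E} (hB : VBounded B) :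
    VBounded {y : E | ∃ x ∈ B, |y| ≤ |x|} := by
  intro V hV
  obtain ⟨U, hU, hUs, hUV⟩ := hls _ hV
  obtain ⟨α, hα, hBU⟩ := hB U hU
  refine ⟨α, hα, ?_⟩
  rintro y ⟨x, hx, hyx⟩
  apply smul_set_mono hUV
  have := hBU hx
  rw [mem_smul_set_iff_inv_smul_mem₀ hα.ne'] at this ⊢
  refine hUs _ this _ ?_
  rw [smul_abs_c hls (by positivity), smul_abs_c hls (by positivity)]
  exact smul_le_smul_c hls (by positivity) hyx

lemma vbounded_add (hls : LocallySolid E) {A B : Set E} (hA : VBounded A) (hB : VBounded B) :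
    VBounded (A + B) := by
  intro W hW
  obtain ⟨W₁, hW₁, hW₁s⟩ := exists_nhds_zero_half hW
  obtain ⟨U, hU, hUs, hUW₁⟩ := hls _ hW₁
  obtain ⟨α, hα, hAU⟩ := hA U hU
  obtain ⟨β, hβ, hBU⟩ := hB U hU
  set γ : ℝ := max α β with hγ
  have hγpos : 0 < γ := lt_of_lt_of_le hα (le_max_left _ _)
  refine ⟨γ, hγpos, ?_⟩
  calc A + B ⊆ γ • U + γ • U :=
        add_subset_add (hAU.trans (solid_smul_subset hls hUs hα (le_max_left _ _)))
          (hBU.trans (solid_smul_subset hls hUs hβ (le_max_right _ _)))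
    _ = γ • (U + U) := (smul_add γ U U).symm
    _ ⊆ γ • W := by
        apply smul_set_mono
        rintro z ⟨u, hu, v, hv, rfl⟩
        exact hW₁s u (hUW₁ hu) v (hUW₁ hv)

lemma vbounded_neg (hls : LocallySolid E) {A : Set E} (hA : VBounded A) : VBounded (-A) := by
  intro V hV
  obtain ⟨U, hU, hUs, hUV⟩ := hls _ hV
  obtain ⟨α, hα, hAU⟩ := hA U hU
  refine ⟨α, hα, ?_⟩
  intro x hx
  apply smul_set_mono hUV
  obtain ⟨u, hu, hux⟩ := hAU (Set.mem_neg.1 hx)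
  simp only [] at hux
  have : x = α • (-u) := by rw [smul_neg, hux, neg_neg]
  rw [this]
  exact smul_mem_smul_set (solid_neg_mem hUs hu)

lemma totBounded_mono {A B : Set E} (h : A ⊆ B) (hB : TotBounded B) : TotBounded A := by
  intro V hV; obtain ⟨F, hF⟩ := hB V hV; exact ⟨F, h.trans hF⟩

lemma totBounded_of_isCompact_closure {B : Set E} (h : IsCompact (closure B)) :
    TotBounded B := by
  intro V hV
  set O := interior V with hO
  have hOn : O ∈ 𝓝 (0 : E) := interior_mem_nhds.2 hV
  have hcov : closure B ⊆ ⋃ y : E, {y} + O := by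
    intro z _
    refine mem_iUnion.2 ⟨z, ?_⟩
    rw [show ({z} + O : Set E) = {z} + O from rfl, singleton_add]
    exact ⟨0, mem_of_mem_nhds hOn, by simp⟩
  obtain ⟨t, ht⟩ := h.elim_finite_subcover (fun y : E => {y} + O)
    (fun y => (isOpen_interior.add_left : IsOpen ({y} + O)))
    hcov
  refine ⟨t, ?_⟩
  intro z hz
  obtain ⟨y, hyt, hzy⟩ := by
    have := ht (subset_closure hz)
    simpa using this
  exact ⟨y, hyt, -y + z, interior_subset hzy, add_neg_cancel_left y z⟩

lemma totBounded_add {A B : Set E} (hA : TotBounded A) (hB : TotBounded B) :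
    TotBounded (A + B) := by
  classical
  intro V hV
  obtain ⟨V₁, hV₁, hV₁s⟩ := exists_nhds_zero_half hV
  obtain ⟨F, hF⟩ := hA V₁ hV₁
  obtain ⟨G, hG⟩ := hB V₁ hV₁
  refine ⟨F + G, ?_⟩
  calc A + B ⊆ (↑F + V₁) + (↑G + V₁) := add_subset_add hF hG
    _ = (↑F + ↑G) + (V₁ + V₁) := add_add_add_comm _ _ _ _
    _ ⊆ ↑(F + G) + V := by
        rw [Finset.coe_add]
        apply add_subset_add_left
        rintro z ⟨u, hu, v, hv, rfl⟩
        exact hV₁s u hu v hv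

lemma totBounded_neg {A : Set E} (hA : TotBounded A) : TotBounded (-A) := by
  classical
  intro V hV
  have hnV : -V ∈ 𝓝 (0 : E) := by
    have : ((-·) : E → E) ⁻¹' V ∈ 𝓝 (0 : E) :=
      continuous_neg.continuousAt.preimage_mem_nhds (by simpa using hV)
    have he : ((-·) : E → E) ⁻¹' V = -V := rfl
    rwa [he] at this
  obtain ⟨F, hF⟩ := hA (-V) hnV
  refine ⟨-F, ?_⟩
  intro z hz
  obtain ⟨f, hf, w, hw, hfw⟩ := hF (Set.mem_neg.1 hz)
  refine ⟨-f, by simpa using hf, -w, by simpa using hw, ?_⟩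
  show -f + -w = z
  simp only [] at hfw
  rw [← neg_add, hfw, neg_neg]

lemma totBounded_closure {A : Set E} (hA : TotBounded A) : TotBounded (closure A) := by
  intro V hV
  obtain ⟨V₁, hV₁, hV₁s⟩ := exists_nhds_zero_half hV
  obtain ⟨F, hF⟩ := hA V₁ hV₁
  refine ⟨F, ?_⟩
  intro z hz
  have hN : (fun w => z - w) ⁻¹' V₁ ∈ 𝓝 z := by
    apply (continuous_const.sub continuous_id).continuousAt.preimage_mem_nhds
    simpa using hV₁
  obtain ⟨w, hwN, hwA⟩ := mem_closure_iff_nhds.1 hz _ hN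
  obtain ⟨f, hf, v, hv, hfv⟩ := hF hwA
  refine ⟨f, hf, v + (z - w), hV₁s v hv _ hwN, ?_⟩
  show f + (v + (z - w)) = z
  simp only [] at hfv
  rw [← add_assoc, hfv]
  abel

lemma abs_sup'_sub_sup'_le {ι : Type*} (t : Finset ι) (ht : t.Nonempty) (f g : ι → E) :
    |t.sup' ht f - t.sup' ht g| ≤ t.sup' ht (fun i => |f i - g i|) := by
  rw [abs_le']
  constructor
  · rw [sub_le_iff_le_add]
    apply Finset.sup'_le
    intro i hi
    calc f i = g i + (f i - g i) := by abel
      _ ≤ t.sup' ht g + t.sup' ht (fun i => |f i - g i|) :=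
          add_le_add (Finset.le_sup' g hi)
            (le_trans (le_abs_self _) (Finset.le_sup' (fun i => |f i - g i|) hi))
      _ = t.sup' ht (fun i => |f i - g i|) + t.sup' ht g := by abel
  · rw [neg_sub, sub_le_iff_le_add]
    apply Finset.sup'_le
    intro i hi
    calc g i = f i + (g i - f i) := by abel
      _ ≤ t.sup' ht f + t.sup' ht (fun i => |f i - g i|) :=
          add_le_add (Finset.le_sup' f hi)
            (le_trans (by rw [← abs_neg, neg_sub]; exact le_abs_self _)
              (Finset.le_sup' (fun i => |f i - g i|) hi))
      _ = t.sup' ht (fun i => |f i - g i|) + t.sup' ht f := by abel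

lemma totBounded_supClosure (hls : LocallySolid E) (ham : AMProperty E)
    {A : Set E} (hA : TotBounded A) : TotBounded (supClosure A) := by
  classical
  rcases A.eq_empty_or_nonempty with rfl | hAne
  · rw [supClosure_empty]; exact fun V hV => ⟨∅, by simp⟩
  intro W hW
  obtain ⟨U, hU, hUs, hUW⟩ := hls _ hW
  obtain ⟨F, hF⟩ := hA U hU
  have hch : ∀ a ∈ A, ∃ f, f ∈ (↑F : Set E) ∧ a - f ∈ U := by
    intro a ha
    obtain ⟨f, hf, u, hu, hfu⟩ := hF ha
    refine ⟨f, hf, ?_⟩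
    simp only [] at hfu
    rw [← hfu, add_sub_cancel_left]
    exact hu
  choose! φ hφF hφU using hch
  set C : Set E := (fun a => |a - φ a|) '' A with hC
  have hCb : VBounded C := by
    have hsub : C ⊆ {y : E | ∃ x ∈ (A + (-(↑F : Set E))), |y| ≤ |x|} := by
      rintro _ ⟨a, ha, rfl⟩
      refine ⟨a - φ a, ⟨a, ha, -(φ a), ?_, (sub_eq_add_neg a (φ a)).symm⟩, by rw [abs_abs]⟩
      rw [Set.mem_neg, neg_neg]; exact hφF a ha
    exact vbounded_mono hsub (vbounded_solidHull hls (vbounded_add hls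
      (totBounded_vbounded hls hA) (vbounded_neg hls (vbounded_finset hls F))))
  have hCU : C ⊆ (1:ℝ) • U := by
    rw [one_smul]
    rintro _ ⟨a, ha, rfl⟩
    exact hUs _ (hφU a ha) _ (by rw [abs_abs])
  have hAM := ham C hCb U hU 1 one_pos hCU
  rw [one_smul] at hAM
  have hGfin : (supClosure (↑F : Set E)).Finite := F.finite_toSet.supClosure
  refine ⟨hGfin.toFinset, ?_⟩
  rintro s hs
  obtain ⟨t, htne, htA, rfl⟩ := hs
  set g := t.sup' htne φ with hg
  have hgmem : g ∈ supClosure (↑F : Set E) :=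
    finsetSup'_mem_supClosure htne (fun i hi => hφF i (htA hi))
  have hhmem : t.sup' htne (fun a => |a - φ a|) ∈ supClosure C :=
    finsetSup'_mem_supClosure htne (fun i hi => ⟨i, htA hi, rfl⟩)
  have habs : |t.sup' htne id - g| ≤ t.sup' htne (fun a => |a - φ a|) := by
    have := abs_sup'_sub_sup'_le t htne id φ
    simpa using this
  have hsg : t.sup' htne id - g ∈ U := by
    exact hUs _ (hAM hhmem) _ (le_trans habs (le_abs_self _))
  refine ⟨g, hGfin.mem_toFinset.2 hgmem, t.sup' htne id - g, hUW hsg, add_sub_cancel g _⟩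

lemma isClosed_Ici' (hls : LocallySolid E) (a : E) : IsClosed (Ici a) := by
  have : Ici a = (fun z => z - a) ⁻¹' {x : E | 0 ≤ x} := by
    ext z; simp [sub_nonneg]
  rw [this]
  exact (isClosed_nonneg hls).preimage (continuous_id.sub continuous_const)

lemma isClosed_Iic' (hls : LocallySolid E) (a : E) : IsClosed (Iic a) := by
  have : Iic a = (fun z => a - z) ⁻¹' {x : E | 0 ≤ x} := by
    ext z; simp [sub_nonneg]
  rw [this]
  exact (isClosed_nonneg hls).preimage (continuous_const.sub continuous_id)

lemma lub_of_compact (hls : LocallySolid E) {A : Set E} (hA : A.Nonempty)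
    (hc : IsCompact (closure (supClosure A))) :
    ∃ y ∈ closure (supClosure A), IsLUB A y := by
  set Δ := supClosure A with hΔ
  have hΔne : Δ.Nonempty := hA.mono subset_supClosure
  haveI : Nonempty ↥Δ := hΔne.to_subtype
  set F : Filter E := ⨅ d : ↥Δ, 𝓟 (Δ ∩ Ici (d : E)) with hF
  have hdir : Directed (· ≥ ·) (fun d : ↥Δ => 𝓟 (Δ ∩ Ici (d : E))) := by
    intro d e
    refine ⟨⟨(d : E) ⊔ (e : E), supClosed_supClosure d.2 e.2⟩, ?_, ?_⟩
    · exact principal_mono.2 (inter_subset_inter_right _ (Ici_subset_Ici.2 le_sup_left))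
    · exact principal_mono.2 (inter_subset_inter_right _ (Ici_subset_Ici.2 le_sup_right))
  haveI hFne : F.NeBot := by
    apply iInf_neBot_of_directed hdir
    intro d
    exact principal_neBot_iff.2 ⟨(d : E), d.2, le_refl _⟩
  have hle : F ≤ 𝓟 (closure Δ) := by
    obtain ⟨d₀, hd₀⟩ := hΔne
    exact le_trans (iInf_le _ ⟨d₀, hd₀⟩)
      (principal_mono.2 ((inter_subset_left).trans subset_closure))
  obtain ⟨y, hyc, hy⟩ := hc.exists_clusterPt hle
  refine ⟨y, hyc, ?_, ?_⟩
  · -- upper bound of A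
    intro a ha
    have haΔ : a ∈ Δ := subset_supClosure ha
    have hIci : Ici a ∈ F :=
      mem_of_superset (mem_iInf_of_mem ⟨a, haΔ⟩ (mem_principal_self _)) inter_subset_right
    have hcl : ClusterPt y (𝓟 (Ici a)) := hy.mono (le_principal_iff.2 hIci)
    have hmem : y ∈ closure (Ici a) := mem_closure_iff_clusterPt.2 hcl
    rwa [(isClosed_Ici' hls a).closure_eq] at hmem
  · -- least
    intro u hu
    have hΔu : Δ ⊆ Iic u := by
      have : u ∈ upperBounds Δ := by
        rw [hΔ, upperBounds_supClosure]; exact hu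
      exact fun d hd => this hd
    have hmem : y ∈ closure (Iic u) := closure_mono hΔu hyc
    rwa [(isClosed_Iic' hls u).closure_eq] at hmem

lemma neg_antitone' {a b : E} (h : a ≤ b) : -b ≤ -a := by
  have h2 := add_le_add_left h (-a - b)
  rw [show a + (-a - b) = -b by abel, show b + (-a - b) = -a by abel] at h2
  exact h2

lemma riesz_decomp {x1 x2 y : E} (h1 : 0 ≤ x1) (h2 : 0 ≤ x2) (hy : |y| ≤ x1 + x2) :
    ∃ y1 y2 : E, y = y1 + y2 ∧ |y1| ≤ x1 ∧ |y2| ≤ x2 := by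
  refine ⟨(y ⊔ (-x1)) ⊓ x1, y - (y ⊔ (-x1)) ⊓ x1, by abel, ?_, ?_⟩
  · rw [abs_le']
    refine ⟨inf_le_right, ?_⟩
    have h := neg_antitone' (le_inf (le_sup_right : -x1 ≤ y ⊔ (-x1))
      ((neg_antitone' h1).trans_eq neg_zero |>.trans h1))
    rwa [neg_neg] at h
  · have hyx : y - x1 ≤ x2 := by
      rw [sub_le_iff_le_add, add_comm]
      exact le_trans (le_abs_self y) hy
    have hyx2 : -x2 ≤ y + x1 := by
      have h : -(x1 + x2) ≤ y := by
        have h' := neg_antitone' ((neg_le_abs y).trans hy)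
        rwa [neg_neg] at h'
      calc -x2 = -(x1 + x2) + x1 := by abel
        _ ≤ y + x1 := add_le_add_left h x1
    have hcalc : y - (y ⊔ (-x1)) ⊓ x1 = (0 ⊓ (y + x1)) ⊔ (y - x1) := by
      rw [sub_inf, sub_sup, sub_self, sub_neg_eq_add]
    rw [abs_le', hcalc]
    constructor
    · exact sup_le (le_trans inf_le_left h2) hyx
    · have hneg : -x2 ≤ (0 : E) := (neg_antitone' h2).trans_eq neg_zero
      have h := neg_antitone' (le_sup_of_le_left (le_inf hneg hyx2)
        : -x2 ≤ (0 ⊓ (y + x1)) ⊔ (y - x1))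
      rwa [neg_neg] at h

lemma isLUB_add' {A B : Set E} {a b : E} (ha : IsLUB A a) (hb : IsLUB B b) :
    IsLUB (A + B) (a + b) := by
  constructor
  · rintro _ ⟨x, hx, y, hy, rfl⟩
    exact add_le_add (ha.1 hx) (hb.1 hy)
  · intro u hu
    have h1 : ∀ y ∈ B, a ≤ u - y := by
      intro y hy
      refine ha.2 (fun x hx => ?_)
      rw [le_sub_iff_add_le]
      exact hu ⟨x, hx, y, hy, rfl⟩
    have h2 : b ≤ u - a := by
      refine hb.2 (fun y hy => ?_)
      rw [le_sub_iff_add_le, add_comm]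
      rw [← le_sub_iff_add_le]
      exact h1 y hy
    rw [add_comm]
    rw [← le_sub_iff_add_le]
    exact h2

end Krengel

/-- Krengel's theorem for `bb`-compact operators: if `Y` has the AM-property and closures of
totally bounded sets in `Y` are compact, then every `bb`-compact operator `T : X → Y` has a
modulus `|T|`, given by the Riesz–Kantorovich formula, which is again `bb`-compact. -/
theorem krengel_bbCompact
    (hlsX : LocallySolid X) (hlsY : LocallySolid Y) (hamY : AMProperty Y)
    (hclY : ∀ S : Set Y, TotBounded S → IsCompact (closure S))
    (T : X →ₗ[ℝ] Y) (hT : ∀ B : Set X, VBounded B → IsCompact (closure (T '' B))) :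
    ∃ S : X →ₗ[ℝ] Y,
      (∀ x : X, 0 ≤ x → IsLUB ((fun y => |T y|) '' {y : X | |y| ≤ x}) (S x)) ∧
      ∀ B : Set X, VBounded B → IsCompact (closure (S '' B)) := by
  classical
  set Ex : X → Set Y := fun x => T '' {z : X | |z| ≤ x} with hEx
  have hExTB : ∀ x : X, TotBounded (Ex x) := fun x =>
    Krengel.totBounded_of_isCompact_closure (hT _ (Krengel.vbounded_interval hlsX x))
  have hExists : ∀ x : X, 0 ≤ x → ∃ y : Y, IsLUB (Ex x) y ∧ y ∈ closure (supClosure (Ex x)) := by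
    intro x hx
    have h1 : TotBounded (supClosure (Ex x)) :=
      Krengel.totBounded_supClosure hlsY hamY (hExTB x)
    have h2 : IsCompact (closure (supClosure (Ex x))) := hclY _ h1
    have hne : (Ex x).Nonempty := ⟨T 0, 0, by simpa using hx, rfl⟩
    obtain ⟨y, hy1, hy2⟩ := Krengel.lub_of_compact hlsY hne h2
    exact ⟨y, hy2, hy1⟩
  choose L hL hLmem using hExists
  have hLuniq : ∀ x (hx : 0 ≤ x) (y : Y), IsLUB (Ex x) y → L x hx = y :=
    fun x hx y h => (hL x hx).unique h
  have hLcongr : ∀ (a b : X) (h : a = b) (ha : 0 ≤ a) (hb : 0 ≤ b), L a ha = L b hb := by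
    rintro a b rfl ha hb; rfl
  have hEadd : ∀ a b : X, 0 ≤ a → 0 ≤ b → Ex (a + b) = Ex a + Ex b := by
    intro a b ha hb
    apply Set.Subset.antisymm
    · rintro _ ⟨z, hz, rfl⟩
      obtain ⟨z1, z2, rfl, h1, h2⟩ := Krengel.riesz_decomp ha hb hz
      exact ⟨T z1, ⟨z1, h1, rfl⟩, T z2, ⟨z2, h2, rfl⟩, (map_add T z1 z2).symm⟩
    · rintro _ ⟨_, ⟨z1, h1, rfl⟩, _, ⟨z2, h2, rfl⟩, rfl⟩
      exact ⟨z1 + z2, le_trans (abs_add_le z1 z2) (add_le_add h1 h2), map_add T z1 z2⟩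
  have hLadd : ∀ a b (ha : 0 ≤ a) (hb : 0 ≤ b),
      L (a + b) (add_nonneg ha hb) = L a ha + L b hb := by
    intro a b ha hb
    apply hLuniq
    rw [hEadd a b ha hb]
    exact Krengel.isLUB_add' (hL a ha) (hL b hb)
  have hL0 : ∀ (h : (0:X) ≤ 0), L 0 h = 0 := by
    intro h
    apply hLuniq
    have hE0 : Ex (0:X) = {0} := by
      apply Set.Subset.antisymm
      · rintro _ ⟨z, hz, rfl⟩
        have hz' : |z| ≤ (0:X) := hz
        have hz0 : z = 0 := by
          have h2 : -z ≤ 0 := le_trans (neg_le_abs z) hz'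
          have h3 := Krengel.neg_antitone' h2
          rw [neg_neg, neg_zero] at h3
          exact le_antisymm (le_trans (le_abs_self z) hz') h3
        simp [hz0]
      · rintro _ rfl
        exact ⟨0, by simp, by simp⟩
    rw [hE0]
    exact isLUB_singleton
  have hLsmul : ∀ (c : ℝ) (hc : 0 < c) (x : X) (hx : 0 ≤ x) (h : 0 ≤ c • x),
      L (c • x) h = c • L x hx := by
    intro c hc x hx h
    apply hLuniq
    constructor
    · rintro _ ⟨z, hz, rfl⟩
      have hzx : |c⁻¹ • z| ≤ x := by
        rw [Krengel.smul_abs_c hlsX (by positivity)]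
        have := Krengel.smul_le_smul_c hlsX (le_of_lt (inv_pos.2 hc)) hz
        rwa [inv_smul_smul₀ hc.ne'] at this
      have hTz : T z = c • T (c⁻¹ • z) := by
        rw [← map_smul, smul_inv_smul₀ hc.ne']
      rw [hTz]
      exact Krengel.smul_le_smul_c hlsY hc.le ((hL x hx).1 ⟨_, hzx, rfl⟩)
    · intro u hu
      have h1 : L x hx ≤ c⁻¹ • u := by
        refine (hL x hx).2 (fun w hw => ?_)
        obtain ⟨z, hz, rfl⟩ := hw
        have hcz : |c • z| ≤ c • x := by
          rw [Krengel.smul_abs_c hlsX hc.le]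
          exact Krengel.smul_le_smul_c hlsX hc.le hz
        have h2 : T (c • z) ≤ u := hu ⟨c • z, hcz, rfl⟩
        rw [map_smul] at h2
        have h3 := Krengel.smul_le_smul_c hlsY (le_of_lt (inv_pos.2 hc)) h2
        rwa [inv_smul_smul₀ hc.ne'] at h3
      have h4 := Krengel.smul_le_smul_c hlsY hc.le h1
      rwa [smul_inv_smul₀ hc.ne'] at h4
  refine ⟨{ toFun := fun x => L x⁺ (posPart_nonneg x) - L x⁻ (negPart_nonneg x),
            map_add' := ?_, map_smul' := ?_ }, ?_, ?_⟩
  · -- additivity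
    intro x y
    show L (x + y)⁺ (posPart_nonneg _) - L (x + y)⁻ (negPart_nonneg _) =
      (L x⁺ (posPart_nonneg x) - L x⁻ (negPart_nonneg x)) +
      (L y⁺ (posPart_nonneg y) - L y⁻ (negPart_nonneg y))
    have h1 := posPart_sub_negPart (x + y)
    have h2 := posPart_sub_negPart x
    have h3 := posPart_sub_negPart y
    have hid : (x + y)⁺ + (x⁻ + y⁻) = (x + y)⁻ + (x⁺ + y⁺) := by
      have h4 : ((x + y)⁺ + (x⁻ + y⁻)) - ((x + y)⁻ + (x⁺ + y⁺))
          = (((x + y)⁺ - (x + y)⁻) - (x⁺ - x⁻)) - (y⁺ - y⁻) := by abel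
      rw [h1, h2, h3] at h4
      have h5 : ((x + y)⁺ + (x⁻ + y⁻)) - ((x + y)⁻ + (x⁺ + y⁺)) = 0 := by rw [h4]; abel
      exact sub_eq_zero.1 h5
    have e1 : L ((x + y)⁺ + (x⁻ + y⁻))
          (add_nonneg (posPart_nonneg _) (add_nonneg (negPart_nonneg x) (negPart_nonneg y)))
        = L ((x + y)⁻ + (x⁺ + y⁺))
          (add_nonneg (negPart_nonneg _) (add_nonneg (posPart_nonneg x) (posPart_nonneg y))) :=
      hLcongr _ _ hid _ _
    rw [hLadd _ _ (posPart_nonneg (x + y)) (add_nonneg (negPart_nonneg x) (negPart_nonneg y)),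
        hLadd _ _ (negPart_nonneg (x + y)) (add_nonneg (posPart_nonneg x) (posPart_nonneg y)),
        hLadd _ _ (negPart_nonneg x) (negPart_nonneg y),
        hLadd _ _ (posPart_nonneg x) (posPart_nonneg y)] at e1
    have e2 : L (x + y)⁺ (posPart_nonneg (x + y)) =
        L (x + y)⁻ (negPart_nonneg (x + y)) +
          (L x⁺ (posPart_nonneg x) + L y⁺ (posPart_nonneg y)) -
          (L x⁻ (negPart_nonneg x) + L y⁻ (negPart_nonneg y)) := by
      rw [← e1]; abel
    rw [e2]; abel
  · -- homogeneity
    intro c x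
    simp only [RingHom.id_apply]
    show L (c • x)⁺ (posPart_nonneg _) - L (c • x)⁻ (negPart_nonneg _) =
      c • (L x⁺ (posPart_nonneg x) - L x⁻ (negPart_nonneg x))
    rcases lt_trichotomy c 0 with hc | hc | hc
    · have hneg : 0 < -c := by linarith
      have hcx : c • x = -((-c) • x) := by rw [neg_smul, neg_neg]
      have hp : (c • x)⁺ = (-c) • x⁻ := by
        rw [hcx, posPart_neg, Krengel.smul_negPart_c hlsX hneg]
      have hn : (c • x)⁻ = (-c) • x⁺ := by
        rw [hcx, negPart_neg, Krengel.smul_posPart_c hlsX hneg]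
      have e1 : L (c • x)⁺ (posPart_nonneg _) = (-c) • L x⁻ (negPart_nonneg x) := by
        rw [hLcongr _ _ hp (posPart_nonneg _)
          (Krengel.smul_nonneg₀ hlsX hneg.le (negPart_nonneg x))]
        exact hLsmul _ hneg _ _ _
      have e2 : L (c • x)⁻ (negPart_nonneg _) = (-c) • L x⁺ (posPart_nonneg x) := by
        rw [hLcongr _ _ hn (negPart_nonneg _)
          (Krengel.smul_nonneg₀ hlsX hneg.le (posPart_nonneg x))]
        exact hLsmul _ hneg _ _ _
      rw [e1, e2, smul_sub, neg_smul, neg_smul]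
      abel
    · subst hc
      have hp : ((0:ℝ) • x)⁺ = (0:X) := by rw [zero_smul]; exact posPart_zero  -- check name
      have hn : ((0:ℝ) • x)⁻ = (0:X) := by rw [zero_smul]; exact negPart_zero
      rw [hLcongr _ _ hp (posPart_nonneg _) le_rfl, hLcongr _ _ hn (negPart_nonneg _) le_rfl,
        hL0, sub_self, zero_smul]
    · have hp : (c • x)⁺ = c • x⁺ := Krengel.smul_posPart_c hlsX hc x
      have hn : (c • x)⁻ = c • x⁻ := Krengel.smul_negPart_c hlsX hc x
      have e1 : L (c • x)⁺ (posPart_nonneg _) = c • L x⁺ (posPart_nonneg x) := by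
        rw [hLcongr _ _ hp (posPart_nonneg _)
          (Krengel.smul_nonneg₀ hlsX hc.le (posPart_nonneg x))]
        exact hLsmul _ hc _ _ _
      have e2 : L (c • x)⁻ (negPart_nonneg _) = c • L x⁻ (negPart_nonneg x) := by
        rw [hLcongr _ _ hn (negPart_nonneg _)
          (Krengel.smul_nonneg₀ hlsX hc.le (negPart_nonneg x))]
        exact hLsmul _ hc _ _ _
      rw [e1, e2, smul_sub]
  · -- Riesz–Kantorovich formula
    intro x hx
    simp only [LinearMap.coe_mk, AddHom.coe_mk]
    have hxp : x⁺ = x := posPart_eq_self.2 hx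
    have hxn : x⁻ = 0 := negPart_eq_zero.2 hx
    rw [hLcongr _ _ hxp (posPart_nonneg x) hx, hLcongr _ _ hxn (negPart_nonneg x) le_rfl,
      hL0, sub_zero]
    have hub : upperBounds ((fun y => |T y|) '' {y : X | |y| ≤ x}) = upperBounds (Ex x) := by
      apply Set.Subset.antisymm
      · rintro u hu _ ⟨z, hz, rfl⟩
        calc T z ≤ |T z| := le_abs_self _
          _ ≤ u := hu ⟨z, hz, rfl⟩
      · rintro u hu _ ⟨z, hz, rfl⟩
        have h1 : T z ≤ u := hu ⟨z, hz, rfl⟩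
        have h2 : T (-z) ≤ u := hu ⟨-z, by rwa [Set.mem_setOf_eq, abs_neg], rfl⟩
        rw [map_neg] at h2
        show |T z| ≤ u
        rw [show |T z| = T z ⊔ -(T z) from rfl]
        exact sup_le h1 h2
    have hlub := hL x hx
    rw [IsLUB, IsLeast, hub]
    exact ⟨hlub.1, hlub.2⟩
  · -- bb-compactness
    intro B hB
    have hsolBb : VBounded {y : X | ∃ x ∈ B, |y| ≤ |x|} := Krengel.vbounded_solidHull hlsX hB
    have hTB1 : TotBounded (T '' {y : X | ∃ x ∈ B, |y| ≤ |x|}) :=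
      Krengel.totBounded_of_isCompact_closure (hT _ hsolBb)
    have hTB2 : TotBounded (supClosure (T '' {y : X | ∃ x ∈ B, |y| ≤ |x|})) :=
      Krengel.totBounded_supClosure hlsY hamY hTB1
    set R : Set Y := closure (supClosure (T '' {y : X | ∃ x ∈ B, |y| ≤ |x|})) with hR
    have hTB3 : TotBounded R := Krengel.totBounded_closure hTB2
    have hTB4 : TotBounded (R + -R) :=
      Krengel.totBounded_add hTB3 (Krengel.totBounded_neg hTB3)
    have hmem : ∀ (x : X) (hx0 : 0 ≤ x),
        (∀ z : X, |z| ≤ x → z ∈ {y : X | ∃ x ∈ B, |y| ≤ |x|}) → L x hx0 ∈ R := by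
      intro x hx0 hsub
      apply closure_mono (supClosure_mono ?_) (hLmem x hx0)
      rintro _ ⟨z, hz, rfl⟩
      exact ⟨z, hsub z hz, rfl⟩
    have hsub : (fun x => L x⁺ (posPart_nonneg x) - L x⁻ (negPart_nonneg x)) '' B ⊆ R + -R := by
      rintro _ ⟨x, hx, rfl⟩
      refine ⟨L x⁺ (posPart_nonneg x), ?_, -(L x⁻ (negPart_nonneg x)), ?_,
        (sub_eq_add_neg _ _).symm⟩
      · exact hmem _ _ (fun z hz => ⟨x, hx, le_trans hz (Krengel.posPart_le_abs' x)⟩)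
      · rw [Set.mem_neg, neg_neg]
        exact hmem _ _ (fun z hz => ⟨x, hx, le_trans hz (Krengel.negPart_le_abs' x)⟩)
    exact IsCompact.of_isClosed_subset (hclY _ hTB4) isClosed_closure (closure_mono (by
      simpa only [LinearMap.coe_mk, AddHom.coe_mk] using hsub))
end

section
/- Let X, Y be Hausdorff locally solid vector lattices, Y with the AM-property and with compact closures of totally bounded sets, and let T: X → Y be linear. If S ⊆ X is such that T(S) is totally bounded and S is solid, then for every x ∈ S ∩ X₊ the supremum sup T([−x, x]) exists in Y and belongs to the closure of (T(S))^∨. -/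
open Filter Topology Set Pointwise

variable {X Y : Type*}
  [AddCommGroup X] [Lattice X] [Module ℝ X] [TopologicalSpace X]
  [IsTopologicalAddGroup X] [ContinuousSMul ℝ X] [CovariantClass X X (· + ·) (· ≤ ·)] [T2Space X]
  [AddCommGroup Y] [Lattice Y] [Module ℝ Y] [TopologicalSpace Y]
  [IsTopologicalAddGroup Y] [ContinuousSMul ℝ Y] [CovariantClass Y Y (· + ·) (· ≤ ·)] [T2Space Y]

section Aux

/-- Birkhoff-type inequality in a lattice-ordered group. -/
lemma aux_abs_sup_sub_sup_le {a b c d : Y} : |a ⊔ b - (c ⊔ d)| ≤ |a - c| ⊔ |b - d| := by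
  set w := |a - c| ⊔ |b - d| with hw
  have h1 : a ⊔ b - (c ⊔ d) ≤ w := by
    rw [sub_le_iff_le_add']
    refine sup_le ?_ ?_
    · calc a ≤ c + |a - c| := by
            rw [← sub_le_iff_le_add']; exact le_abs_self _
        _ ≤ c ⊔ d + w := add_le_add le_sup_left le_sup_left
    · calc b ≤ d + |b - d| := by
            rw [← sub_le_iff_le_add']; exact le_abs_self _
        _ ≤ c ⊔ d + w := add_le_add le_sup_right le_sup_right
  have h2 : -(a ⊔ b - (c ⊔ d)) ≤ w := by
    rw [neg_sub, sub_le_iff_le_add']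
    refine sup_le ?_ ?_
    · calc c ≤ a + |c - a| := by
            rw [← sub_le_iff_le_add']; exact le_abs_self _
        _ ≤ a ⊔ b + w := add_le_add le_sup_left (by rw [abs_sub_comm]; exact le_sup_left)
    · calc d ≤ b + |d - b| := by
            rw [← sub_le_iff_le_add']; exact le_abs_self _
        _ ≤ a ⊔ b + w := add_le_add le_sup_right (by rw [abs_sub_comm]; exact le_sup_right)
  exact abs_le'.2 ⟨h1, h2⟩

/-- Finite-sup version of the Birkhoff inequality. -/
lemma aux_abs_sup'_sub_sup'_le {ι : Type*} (t : Finset ι) (ht : t.Nonempty) (f g : ι → Y) :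
    |t.sup' ht f - t.sup' ht g| ≤ t.sup' ht fun i => |f i - g i| := by
  induction ht using Finset.Nonempty.cons_induction with
  | singleton a => simp
  | cons a s ha hs ih =>
      rw [Finset.sup'_cons (H := hs), Finset.sup'_cons (H := hs), Finset.sup'_cons (H := hs)]
      exact le_trans aux_abs_sup_sub_sup_le (sup_le_sup le_rfl ih)

/-- Finite sets are von Neumann bounded. -/
lemma aux_vBounded_of_finite {B : Set Y} (hB : B.Finite) : VBounded B := by
  intro V hV
  rcases B.eq_empty_or_nonempty with rfl | hne
  · exact ⟨1, one_pos, by simp⟩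
  have hch : ∀ y : Y, ∃ ε : ℝ, 0 < ε ∧ ∀ t : ℝ, |t| < ε → t • y ∈ V := by
    intro y
    have hcont : Tendsto (fun t : ℝ => t • y) (𝓝 0) (𝓝 0) := by
      have : Continuous fun t : ℝ => t • y := continuous_id.smul continuous_const
      simpa using this.tendsto 0
    have h2 : (fun t : ℝ => t • y) ⁻¹' V ∈ 𝓝 (0 : ℝ) := by
      rw [← Filter.mem_map]; exact hcont hV
    rw [Metric.mem_nhds_iff] at h2
    obtain ⟨ε, hε, hball⟩ := h2
    exact ⟨ε, hε, fun t ht => hball (by simpa [Real.dist_eq] using ht)⟩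
  choose ε hε hεV using hch
  obtain ⟨F, hFB⟩ := hB.exists_finset_coe
  have hFne : F.Nonempty := by
    rw [← Finset.coe_nonempty, hFB]; exact hne
  set m := F.inf' hFne ε with hm
  have hm0 : 0 < m := by
    rw [hm, Finset.lt_inf'_iff]; exact fun y _ => hε y
  refine ⟨2 / m, by positivity, ?_⟩
  intro y hy
  have hα : (2 / m : ℝ) ≠ 0 := by positivity
  rw [Set.mem_smul_set_iff_inv_smul_mem₀ hα]
  apply hεV
  have h2 : |(2 / m : ℝ)⁻¹| = m / 2 := by
    rw [abs_of_pos (by positivity)]; field_simp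
  rw [h2]
  have hyF : y ∈ F := by rw [← Finset.mem_coe, hFB]; exact hy
  calc m / 2 < m := by linarith
    _ ≤ ε y := Finset.inf'_le _ hyF

/-- The positive cone is closed. -/
lemma aux_isClosed_nonneg (hlsY : LocallySolid Y) : IsClosed {y : Y | (0 : Y) ≤ y} := by
  rw [← closure_subset_iff_isClosed]
  intro z hz
  show (0 : Y) ≤ z
  rw [← negPart_eq_zero]
  by_contra h0
  have hV : ({z⁻}ᶜ : Set Y) ∈ 𝓝 (0 : Y) :=
    (isOpen_compl_singleton).mem_nhds (by simpa using (Ne.symm h0))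
  obtain ⟨U, hU, hUsolid, hUV⟩ := hlsY _ hV
  have hN : (fun y => y - z) ⁻¹' U ∈ 𝓝 z := by
    have hc : ContinuousAt (fun y : Y => y - z) z := (continuous_id.sub continuous_const).continuousAt
    exact hc.preimage_mem_nhds (by simpa using hU)
  obtain ⟨p, hp1, hp2⟩ := mem_closure_iff_nhds.1 hz _ hN
  have hpU : p - z ∈ U := hp1
  have hp0 : (0 : Y) ≤ p := hp2
  have key : |z⁻ - p⁻| ≤ |p - z| := by
    have := aux_abs_sup_sub_sup_le (Y := Y) (a := -z) (b := 0) (c := -p) (d := 0)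
    have h1 : |(-z : Y) - -p| = |p - z| := by rw [neg_sub_neg, abs_sub_comm]
    have h2 : |(0 : Y) - 0| = 0 := by simp
    rw [h1, h2, sup_of_le_left (abs_nonneg _)] at this
    simpa [negPart] using this
  rw [negPart_eq_zero.2 hp0, sub_zero] at key
  have hzU : z⁻ ∈ U := hUsolid _ hpU _ key
  exact (hUV hzU) rfl

lemma aux_isClosed_Ici (hlsY : LocallySolid Y) (d : Y) : IsClosed (Set.Ici d) := by
  have : Set.Ici d = (fun y : Y => y - d) ⁻¹' {y : Y | (0 : Y) ≤ y} := by
    ext y; simp [sub_nonneg]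
  rw [this]
  exact (aux_isClosed_nonneg hlsY).preimage (continuous_id.sub continuous_const)

lemma aux_isClosed_Iic (hlsY : LocallySolid Y) (u : Y) : IsClosed (Set.Iic u) := by
  have : Set.Iic u = (fun y : Y => u - y) ⁻¹' {y : Y | (0 : Y) ≤ y} := by
    ext y; simp [sub_nonneg]
  rw [this]
  exact (aux_isClosed_nonneg hlsY).preimage (continuous_const.sub continuous_id)

/-- The sup-closure of a totally bounded set is totally bounded. -/
lemma aux_totBounded_supClosure (hlsY : LocallySolid Y) (hamY : AMProperty Y)
    {B : Set Y} (hB : TotBounded B) : TotBounded (supClosure B) := by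
  intro V hV
  obtain ⟨U, hU, hUsolid, hUV⟩ := hlsY V hV
  obtain ⟨F, hF⟩ := hB U hU
  have hfin : (supClosure (↑F : Set Y)).Finite := F.finite_toSet.supClosure
  refine ⟨hfin.toFinset, ?_⟩
  rintro b ⟨t, ht, htB, rfl⟩
  classical
  have hch : ∀ y : Y, y ∈ B → ∃ f, f ∈ (F : Set Y) ∧ y - f ∈ U := by
    intro y hy
    obtain ⟨f, hf, u, hu, hfu⟩ := Set.mem_add.1 (hF hy)
    exact ⟨f, hf, by rw [← hfu]; simpa using hu⟩
  choose! φ hφF hφU using hch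
  have hφF' : ∀ y ∈ t, φ y ∈ (F : Set Y) := fun y hy => hφF y (htB hy)
  have hφU' : ∀ y ∈ t, y - φ y ∈ U := fun y hy => hφU y (htB hy)
  set c := t.sup' ht φ with hc
  have hcmem : c ∈ supClosure (F : Set Y) := finsetSup'_mem_supClosure ht hφF'
  set w := t.sup' ht (fun y => |y - φ y|) with hwdef
  have hkey : |t.sup' ht id - c| ≤ w := aux_abs_sup'_sub_sup'_le t ht id φ
  -- `w` belongs to `U` thanks to the AM-property applied to a finite set
  set Bf : Set Y := (fun y => |y - φ y|) '' (t : Set Y) with hBf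
  have hBfU : Bf ⊆ U := by
    rintro _ ⟨y, hy, rfl⟩
    exact hUsolid _ (hφU' y hy) _ (abs_abs (y - φ y)).le
  have hBfU1 : Bf ⊆ (1 : ℝ) • U := by rw [one_smul]; exact hBfU
  have hBfb : VBounded Bf := aux_vBounded_of_finite ((t.finite_toSet).image _)
  have hwBf : w ∈ supClosure Bf :=
    finsetSup'_mem_supClosure ht (fun y hy => ⟨y, hy, rfl⟩)
  have hwU : w ∈ U := by
    have := hamY Bf hBfb U hU 1 one_pos hBfU1 hwBf
    rwa [one_smul] at this
  have hdiff : t.sup' ht id - c ∈ U := hUsolid _ hwU _ (le_trans hkey (le_abs_self _))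
  exact ⟨c, by rwa [hfin.coe_toFinset], t.sup' ht id - c, hUV hdiff, by
    show c + (t.sup' ht id - c) = t.sup' ht id
    abel⟩

/-- Existence of suprema for sup-closed sets with compact closure. -/
lemma aux_exists_isLUB (hlsY : LocallySolid Y) {D : Set Y} (hne : D.Nonempty)
    (hd : SupClosed D) (hcomp : IsCompact (closure D)) :
    ∃ s, IsLUB D s ∧ s ∈ closure D := by
  haveI : Nonempty ↥D := hne.to_subtype
  haveI hdir : IsDirected ↥D (· ≤ ·) :=
    ⟨fun a b => ⟨⟨(a : Y) ⊔ b, hd a.2 b.2⟩, le_sup_left, le_sup_right⟩⟩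
  haveI : NeBot (atTop : Filter ↥D) := atTop_neBot_iff.2 ⟨‹Nonempty ↥D›, hdir⟩
  set F : Filter Y := map (Subtype.val : ↥D → Y) atTop with hFdef
  have hFD : D ∈ F := by
    rw [mem_map]
    exact univ_mem' fun i => i.2
  have hFle : F ≤ 𝓟 (closure D) :=
    le_principal_iff.2 (mem_of_superset hFD subset_closure)
  obtain ⟨s, hscl, hclust⟩ := hcomp.exists_clusterPt hFle
  refine ⟨s, ⟨?_, ?_⟩, hscl⟩
  · intro d hd'
    have hIci : Set.Ici d ∈ F := by
      rw [mem_map]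
      exact mem_of_superset (mem_atTop (⟨d, hd'⟩ : ↥D)) (fun i hi => hi)
    have : ClusterPt s (𝓟 (Set.Ici d)) := hclust.mono (le_principal_iff.2 hIci)
    have hmem : s ∈ closure (Set.Ici d) := mem_closure_iff_clusterPt.2 this
    rwa [(aux_isClosed_Ici hlsY d).closure_eq] at hmem
  · intro u hu
    have hIic : Set.Iic u ∈ F := mem_of_superset hFD (fun y hy => hu hy)
    have : ClusterPt s (𝓟 (Set.Iic u)) := hclust.mono (le_principal_iff.2 hIic)
    have hmem : s ∈ closure (Set.Iic u) := mem_closure_iff_clusterPt.2 this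
    rwa [(aux_isClosed_Iic hlsY u).closure_eq] at hmem

end Aux

/-- If `T '' S` is totally bounded and `S` is solid, then for every positive `x ∈ S` the
supremum of `T '' [−x, x]` exists in `Y` and lies in the closure of `(T '' S)^∨`. -/
theorem exists_isLUB_image_Icc
    (hlsX : LocallySolid X) (hlsY : LocallySolid Y) (hamY : AMProperty Y)
    (hclY : ∀ S : Set Y, TotBounded S → IsCompact (closure S))
    (T : X →ₗ[ℝ] Y) (S : Set X) (hS : IsSolidSet S) (hTS : TotBounded (T '' S)) :
    ∀ x ∈ S, 0 ≤ x →
      ∃ s : Y, IsLUB (T '' Set.Icc (-x) x) s ∧ s ∈ closure (supClosure (T '' S)) := by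
  intro x hxS hx0
  set B : Set Y := T '' Set.Icc (-x) x with hB
  have hIccS : Set.Icc (-x) x ⊆ S := by
    intro y hy
    have habs : |y| ≤ |x| := by
      rw [abs_of_nonneg hx0]
      exact abs_le'.2 ⟨hy.2, neg_le.2 hy.1⟩
    exact hS x hxS y habs
  have hBtb : TotBounded B := by
    intro V hV
    obtain ⟨F, hF⟩ := hTS V hV
    exact ⟨F, (Set.image_mono hIccS).trans hF⟩
  have hBne : B.Nonempty := ⟨T x, x, ⟨neg_le_self hx0, le_rfl⟩, rfl⟩
  have hDtb := aux_totBounded_supClosure hlsY hamY hBtb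
  have hcomp := hclY _ hDtb
  obtain ⟨s, hlub, hscl⟩ :=
    aux_exists_isLUB hlsY (hBne.mono subset_supClosure) supClosed_supClosure hcomp
  refine ⟨s, isLUB_supClosure.1 hlub, ?_⟩
  exact closure_mono (supClosure_mono (Set.image_mono hIccS)) hscl
end
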